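/- arXiv:2501.19379 — 6 statements merged into one kernel-verified Lean document; each statement's English description precedes it below -/
import Mathlib

section
/- Let (R,e) be a D*-ring and let ε̄ and μ̄ be two K-bases of D. Then the D*-polynomial rings R{x̄}_{D*}^{ε̄} and R{x̄}_{D*}^{μ̄} are isomorphic as (R,e)-algebras. -/
/-!
Read a polynomial `q ∈ K[Y_σ]` as the constant-coefficient operator `q(d)`, so that the variable
`X (i, θ)` is `d^θ xᵢ`. Writing `μ k = ∑ j, c j k • ε j` with `c = ε.toMatrix μ`, the `μ`-structure
has `ε`-coordinates `d'ⱼ = ∑ k, c j k • dₖ`, so the isomorphism is `d^θ xᵢ ↦ ∏ⱼ d'ⱼ ^ θⱼ xᵢ`: it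
comes from the linear change of variables `Yⱼ ↦ ∑ k, c j k • Yₖ` of `K[Y_σ]`, which is invertible
since `c` is. Both structure maps extend the same `e`, so compatibility only has to be checked on the
variables.
-/

open scoped TensorProduct
open MvPolynomial

namespace DStarPolynomial

section LinearSubst

variable {K σ : Type*} [CommSemiring K] [Fintype σ]

noncomputable def linearSubst (M : Matrix σ σ K) : MvPolynomial σ K →ₐ[K] MvPolynomial σ K :=
  aeval fun j => ∑ k, M j k • X k

theorem linearSubst_X (M : Matrix σ σ K) (j : σ) : linearSubst M (X j) = ∑ k, M j k • X k :=
  aeval_X _ j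

theorem linearSubst_comp_linearSubst (M N : Matrix σ σ K) :
    (linearSubst M).comp (linearSubst N) = linearSubst (N * M) := by
  refine algHom_ext fun j => ?_
  simp only [AlgHom.comp_apply, linearSubst_X, map_sum, map_smul, Finset.smul_sum, smul_smul,
    Matrix.mul_apply, Finset.sum_smul]
  exact Finset.sum_comm

theorem linearSubst_X_mul (M : Matrix σ σ K) (j : σ) (q : MvPolynomial σ K) :
    linearSubst M (X j * q) = (∑ k, M j k • X k) * linearSubst M q := by
  rw [map_mul, linearSubst_X]

theorem linearSubst_one [DecidableEq σ] : linearSubst (1 : Matrix σ σ K) = AlgHom.id K _ := by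
  refine algHom_ext fun j => ?_
  simp [linearSubst_X, Matrix.one_apply]

noncomputable def linearSubstEquiv [DecidableEq σ] (M : (Matrix σ σ K)ˣ) :
    MvPolynomial σ K ≃ₐ[K] MvPolynomial σ K :=
  AlgEquiv.ofAlgHom (linearSubst M) (linearSubst ↑M⁻¹)
    (by rw [linearSubst_comp_linearSubst, M.inv_mul, linearSubst_one])
    (by rw [linearSubst_comp_linearSubst, M.mul_inv, linearSubst_one])

end LinearSubst

section DiffOp

variable {K R σ ι : Type*} [CommSemiring K] [CommSemiring R] [Algebra K R]

/-- `diffOp i q` is `q(d) xᵢ`: the monomial `Y^d` is sent to the variable `X (i, d)`. -/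
noncomputable def diffOp (i : ι) : MvPolynomial σ K →ₗ[K] MvPolynomial (ι × (σ → ℕ)) R :=
  (basisMonomials σ K).constr K fun d => X (i, ⇑d)

theorem diffOp_monomial (i : ι) (d : σ →₀ ℕ) (a : K) :
    (diffOp i (monomial d a) : MvPolynomial (ι × (σ → ℕ)) R) = a • X (i, ⇑d) := by
  have h : monomial d a = a • (basisMonomials σ K) d := by simp [smul_monomial]
  rw [h, map_smul, diffOp, Module.Basis.constr_basis]

variable [Finite σ]

theorem X_eq_diffOp (i : ι) (θ : σ → ℕ) :
    (X (i, θ) : MvPolynomial (ι × (σ → ℕ)) R) =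
      diffOp i (monomial (Finsupp.equivFunOnFinite.symm θ) (1 : K)) := by
  rw [diffOp_monomial, one_smul, Finsupp.coe_equivFunOnFinite_symm]

noncomputable def substOp (g : MvPolynomial σ K →ₗ[K] MvPolynomial σ K) :
    MvPolynomial (ι × (σ → ℕ)) R →ₐ[R] MvPolynomial (ι × (σ → ℕ)) R :=
  aeval fun p => diffOp p.1 (g (monomial (Finsupp.equivFunOnFinite.symm p.2) 1))

theorem substOp_X (g : MvPolynomial σ K →ₗ[K] MvPolynomial σ K) (i : ι) (θ : σ → ℕ) :
    (substOp g (X (i, θ)) : MvPolynomial (ι × (σ → ℕ)) R) =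
      diffOp i (g (monomial (Finsupp.equivFunOnFinite.symm θ) 1)) :=
  aeval_X _ _

theorem substOp_diffOp (g : MvPolynomial σ K →ₗ[K] MvPolynomial σ K) (i : ι)
    (q : MvPolynomial σ K) :
    (substOp g (diffOp i q) : MvPolynomial (ι × (σ → ℕ)) R) = diffOp i (g q) := by
  have h : ((substOp g).restrictScalars K).toLinearMap ∘ₗ diffOp i =
      (diffOp i ∘ₗ g : MvPolynomial σ K →ₗ[K] MvPolynomial (ι × (σ → ℕ)) R) := by
    refine (basisMonomials σ K).ext fun d => ?_
    rw [coe_basisMonomials, LinearMap.comp_apply, LinearMap.comp_apply, AlgHom.toLinearMap_apply,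
      AlgHom.coe_restrictScalars', diffOp_monomial, one_smul, substOp_X,
      Finsupp.equivFunOnFinite_symm_coe]
  exact LinearMap.congr_fun h q

theorem substOp_comp (g h : MvPolynomial σ K →ₗ[K] MvPolynomial σ K) :
    (substOp (g ∘ₗ h) : MvPolynomial (ι × (σ → ℕ)) R →ₐ[R] _) =
      (substOp g).comp (substOp h) := by
  refine algHom_ext fun ⟨i, θ⟩ => ?_
  rw [AlgHom.comp_apply, substOp_X, substOp_X, substOp_diffOp, LinearMap.comp_apply]

theorem substOp_id :
    (substOp (LinearMap.id : MvPolynomial σ K →ₗ[K] _) : MvPolynomial (ι × (σ → ℕ)) R →ₐ[R] _) =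
      AlgHom.id R _ := by
  refine algHom_ext fun ⟨i, θ⟩ => ?_
  rw [substOp_X, LinearMap.id_apply, AlgHom.id_apply, ← X_eq_diffOp]

noncomputable def substEquiv (g : MvPolynomial σ K ≃ₗ[K] MvPolynomial σ K) :
    MvPolynomial (ι × (σ → ℕ)) R ≃ₐ[R] MvPolynomial (ι × (σ → ℕ)) R :=
  AlgEquiv.ofAlgHom (substOp (g : MvPolynomial σ K →ₗ[K] _))
    (substOp (g.symm : MvPolynomial σ K →ₗ[K] _))
    (by rw [← substOp_comp, g.comp_symm, substOp_id])
    (by rw [← substOp_comp, g.symm_comp, substOp_id])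

end DiffOp

theorem sum_tmul_eq_sum_tmul_basis {K M D κ σ : Type*} [CommSemiring K] [AddCommMonoid M]
    [Module K M] [AddCommMonoid D] [Module K D] [Fintype κ] [Fintype σ]
    (ε : Module.Basis σ K D) (μ : κ → D) (f : κ → M) :
    ∑ k, f k ⊗ₜ[K] μ k = ∑ j, (∑ k, ε.repr (μ k) j • f k) ⊗ₜ[K] ε j := by
  simp_rw [TensorProduct.sum_tmul, TensorProduct.smul_tmul]
  rw [Finset.sum_comm]
  refine Finset.sum_congr rfl fun k _ => ?_
  rw [← TensorProduct.tmul_sum, ε.sum_repr]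

section DStructure

variable {K R D σ ι : Type*} [CommSemiring K] [CommSemiring R] [Algebra K R]
  [Semiring D] [Algebra K D] [Fintype σ] [DecidableEq σ]

theorem apply_diffOp_eq_sum (ν : σ → D)
    (eν : MvPolynomial (ι × (σ → ℕ)) R →ₗ[K] MvPolynomial (ι × (σ → ℕ)) R ⊗[K] D)
    (hν : ∀ (i : ι) (θ : σ → ℕ), eν (X (i, θ)) =
      ∑ j, (X (i, fun l => θ l + if l = j then 1 else 0) :
        MvPolynomial (ι × (σ → ℕ)) R) ⊗ₜ[K] ν j)
    (i : ι) (q : MvPolynomial σ K) :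
    eν (diffOp i q) = ∑ j, diffOp i (X j * q) ⊗ₜ[K] ν j := by
  induction q using MvPolynomial.induction_on' with
  | monomial d a =>
    have hshift : ∀ j, ⇑(Finsupp.single j 1 + d : σ →₀ ℕ) =
        fun l => d l + if l = j then 1 else 0 :=
      fun j => by ext l; simp [Finsupp.single_apply, eq_comm, add_comm]
    rw [diffOp_monomial, map_smul, hν, Finset.smul_sum]
    refine Finset.sum_congr rfl fun j _ => ?_
    rw [← pow_one (X j), ← monomial_single_add, diffOp_monomial, hshift,
      TensorProduct.smul_tmul']
  | add p q hp hq =>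
    simp only [map_add, hp, hq, mul_add, TensorProduct.add_tmul, Finset.sum_add_distrib]

theorem apply_substOp_diffOp (ε : Module.Basis σ K D) (μ : σ → D)
    (eε eμ : MvPolynomial (ι × (σ → ℕ)) R →ₐ[K] MvPolynomial (ι × (σ → ℕ)) R ⊗[K] D)
    (hε : ∀ (i : ι) (θ : σ → ℕ), eε (X (i, θ)) =
      ∑ j, (X (i, fun l => θ l + if l = j then 1 else 0) :
        MvPolynomial (ι × (σ → ℕ)) R) ⊗ₜ[K] ε j)
    (hμ : ∀ (i : ι) (θ : σ → ℕ), eμ (X (i, θ)) =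
      ∑ j, (X (i, fun l => θ l + if l = j then 1 else 0) :
        MvPolynomial (ι × (σ → ℕ)) R) ⊗ₜ[K] μ j)
    (g : MvPolynomial σ K →ₗ[K] MvPolynomial σ K)
    (hg : ∀ j q, g (X j * q) = (∑ k, ε.toMatrix μ j k • X k) * g q) (i : ι)
    (q : MvPolynomial σ K) :
    eμ (substOp g (diffOp i q)) =
      Algebra.TensorProduct.map ((substOp g).restrictScalars K) (AlgHom.id K D)
        (eε (diffOp i q)) :=
  calc eμ (substOp g (diffOp i q))
      _ = ∑ k, diffOp i (X k * g q) ⊗ₜ[K] μ k := by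
        rw [substOp_diffOp]; exact apply_diffOp_eq_sum μ eμ.toLinearMap hμ i (g q)
      _ = ∑ j, diffOp i ((∑ k, ε.toMatrix μ j k • X k) * g q) ⊗ₜ[K] ε j := by
        rw [sum_tmul_eq_sum_tmul_basis ε]
        refine Finset.sum_congr rfl fun j _ => ?_
        rw [Finset.sum_mul, map_sum]
        congr 1
        refine Finset.sum_congr rfl fun k _ => ?_
        rw [smul_mul_assoc, map_smul, Module.Basis.toMatrix_apply]
      _ = ∑ j, substOp g (diffOp i (X j * q)) ⊗ₜ[K] ε j := by
        simp only [hg, substOp_diffOp]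
      _ = _ := by
        rw [show eε (diffOp i q) = _ from apply_diffOp_eq_sum ε eε.toLinearMap hε i q, map_sum]
        simp only [Algebra.TensorProduct.map_tmul]
        rfl

end DStructure

theorem comp_eq_map_comp_of_X {K R D τ : Type*} [CommSemiring K] [CommSemiring R] [Algebra K R]
    [CommSemiring D] [Algebra K D] (e : R →ₐ[K] R ⊗[K] D)
    (e₁ e₂ : MvPolynomial τ R →ₐ[K] MvPolynomial τ R ⊗[K] D)
    (h₁ : ∀ r, e₁ (algebraMap R _ r) = Algebra.TensorProduct.map
      (IsScalarTower.toAlgHom K R (MvPolynomial τ R)) (AlgHom.id K D) (e r))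
    (h₂ : ∀ r, e₂ (algebraMap R _ r) = Algebra.TensorProduct.map
      (IsScalarTower.toAlgHom K R (MvPolynomial τ R)) (AlgHom.id K D) (e r))
    (ψ : MvPolynomial τ R →ₐ[R] MvPolynomial τ R)
    (hX : ∀ s, e₂ (ψ (X s)) =
      Algebra.TensorProduct.map (ψ.restrictScalars K) (AlgHom.id K D) (e₁ (X s))) :
    e₂.comp (ψ.restrictScalars K) =
      (Algebra.TensorProduct.map (ψ.restrictScalars K) (AlgHom.id K D)).comp e₁ := by
  have hψ : (ψ.restrictScalars K).comp (IsScalarTower.toAlgHom K R (MvPolynomial τ R)) =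
      IsScalarTower.toAlgHom K R (MvPolynomial τ R) := AlgHom.ext ψ.commutes
  have hmap : (Algebra.TensorProduct.map (ψ.restrictScalars K) (AlgHom.id K D)).comp
      (Algebra.TensorProduct.map (IsScalarTower.toAlgHom K R (MvPolynomial τ R)) (AlgHom.id K D)) =
      Algebra.TensorProduct.map (IsScalarTower.toAlgHom K R (MvPolynomial τ R)) (AlgHom.id K D) := by
    rw [← Algebra.TensorProduct.map_comp, hψ, AlgHom.id_comp]
  refine algHom_ext' (AlgHom.ext fun r => ?_) hX
  simp only [AlgHom.comp_apply, IsScalarTower.coe_toAlgHom', AlgHom.coe_restrictScalars',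
    AlgHom.commutes, h₁, h₂]
  exact (AlgHom.congr_fun hmap (e r)).symm

end DStarPolynomial

open DStarPolynomial

theorem dStarPolynomial_basis_independent_general
    {K R D : Type} [Field K] [CommRing R] [Algebra K R]
    [CommRing D] [Algebra K D]
    {m : ℕ} (ε μ : Module.Basis (Fin (m + 1)) K D)
    (e : R →ₐ[K] R ⊗[K] D)
    (ι : Type)
    -- the D*-polynomial ring built from the basis ε
    (eε : MvPolynomial (ι × (Fin (m + 1) → ℕ)) R →ₐ[K]
      (MvPolynomial (ι × (Fin (m + 1) → ℕ)) R) ⊗[K] D)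
    (hεext : ∀ r : R,
      eε (algebraMap R (MvPolynomial (ι × (Fin (m + 1) → ℕ)) R) r) =
        Algebra.TensorProduct.map
          (IsScalarTower.toAlgHom K R (MvPolynomial (ι × (Fin (m + 1) → ℕ)) R))
          (AlgHom.id K D) (e r))
    (hεvar : ∀ (i : ι) (θ : Fin (m + 1) → ℕ),
      eε (X (i, θ)) =
        ∑ j : Fin (m + 1),
          (X (i, fun l => θ l + if l = j then 1 else 0) :
            MvPolynomial (ι × (Fin (m + 1) → ℕ)) R) ⊗ₜ[K] ε j)
    -- the D*-polynomial ring built from the basis μ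
    (eμ : MvPolynomial (ι × (Fin (m + 1) → ℕ)) R →ₐ[K]
      (MvPolynomial (ι × (Fin (m + 1) → ℕ)) R) ⊗[K] D)
    (hμext : ∀ r : R,
      eμ (algebraMap R (MvPolynomial (ι × (Fin (m + 1) → ℕ)) R) r) =
        Algebra.TensorProduct.map
          (IsScalarTower.toAlgHom K R (MvPolynomial (ι × (Fin (m + 1) → ℕ)) R))
          (AlgHom.id K D) (e r))
    (hμvar : ∀ (i : ι) (θ : Fin (m + 1) → ℕ),
      eμ (X (i, θ)) =
        ∑ j : Fin (m + 1),
          (X (i, fun l => θ l + if l = j then 1 else 0) :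
            MvPolynomial (ι × (Fin (m + 1) → ℕ)) R) ⊗ₜ[K] μ j) :
    ∃ ψ : MvPolynomial (ι × (Fin (m + 1) → ℕ)) R ≃ₐ[R]
        MvPolynomial (ι × (Fin (m + 1) → ℕ)) R,
      ∀ p : MvPolynomial (ι × (Fin (m + 1) → ℕ)) R,
        eμ (ψ p) =
          Algebra.TensorProduct.map
            (AlgHom.restrictScalars K (ψ : MvPolynomial (ι × (Fin (m + 1) → ℕ)) R →ₐ[R]
              MvPolynomial (ι × (Fin (m + 1) → ℕ)) R))
            (AlgHom.id K D) (eε p) := by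
  let U : (Matrix (Fin (m + 1)) (Fin (m + 1)) K)ˣ :=
    ⟨ε.toMatrix μ, μ.toMatrix ε, ε.toMatrix_mul_toMatrix_flip μ, μ.toMatrix_mul_toMatrix_flip ε⟩
  let ψ : MvPolynomial (ι × (Fin (m + 1) → ℕ)) R ≃ₐ[R] MvPolynomial (ι × (Fin (m + 1) → ℕ)) R :=
    substEquiv (linearSubstEquiv U).toLinearEquiv
  have hX : ∀ s, eμ (ψ (X s)) =
      Algebra.TensorProduct.map (AlgHom.restrictScalars K (ψ : _ →ₐ[R] _)) (AlgHom.id K D)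
        (eε (X s)) := by
    rintro ⟨i, θ⟩
    rw [X_eq_diffOp (K := K)]
    exact apply_substOp_diffOp ε μ eε eμ hεvar hμvar _ (linearSubst_X_mul (ε.toMatrix μ)) i _
  exact ⟨ψ, AlgHom.congr_fun (comp_eq_map_comp_of_X e eε eμ hεext hμext _ hX)⟩

/-- Independence of the `D*`-polynomial ring from the chosen basis:
if `ε` and `μ` are two `K`-bases of `D`, and `eε`, `eμ` are the canonical `D`-structures
on the polynomial ring `R[dᶿxᵢ]` built from `ε` and `μ` respectively (both extending the
`D*`-ring structure `e` of `R`), then the two `D*`-polynomial rings are isomorphic as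
`(R, e)`-algebras, i.e. there is an `R`-algebra isomorphism commuting with the
`D`-structures. -/
theorem dStarPolynomial_basis_independent
    {K R D : Type} [Field K] [CommRing R] [Algebra K R]
    [CommRing D] [Algebra K D] [FiniteDimensional K D]
    {m : ℕ} (ε μ : Module.Basis (Fin (m + 1)) K D)
    (e : R →ₐ[K] R ⊗[K] D)
    -- (R, e) is a D*-ring: commuting coordinate maps (with respect to ε, say)
    (δR : Fin (m + 1) → R → R)
    (hδR : ∀ r : R, e r = ∑ j : Fin (m + 1), δR j r ⊗ₜ[K] ε j)
    (hδRcomm : ∀ (j k : Fin (m + 1)) (r : R), δR j (δR k r) = δR k (δR j r))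
    (ι : Type)
    -- the D*-polynomial ring built from the basis ε
    (eε : MvPolynomial (ι × (Fin (m + 1) → ℕ)) R →ₐ[K]
      (MvPolynomial (ι × (Fin (m + 1) → ℕ)) R) ⊗[K] D)
    (hεext : ∀ r : R,
      eε (algebraMap R (MvPolynomial (ι × (Fin (m + 1) → ℕ)) R) r) =
        Algebra.TensorProduct.map
          (IsScalarTower.toAlgHom K R (MvPolynomial (ι × (Fin (m + 1) → ℕ)) R))
          (AlgHom.id K D) (e r))
    (hεvar : ∀ (i : ι) (θ : Fin (m + 1) → ℕ),
      eε (X (i, θ)) =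
        ∑ j : Fin (m + 1),
          (X (i, fun l => θ l + if l = j then 1 else 0) :
            MvPolynomial (ι × (Fin (m + 1) → ℕ)) R) ⊗ₜ[K] ε j)
    -- the D*-polynomial ring built from the basis μ
    (eμ : MvPolynomial (ι × (Fin (m + 1) → ℕ)) R →ₐ[K]
      (MvPolynomial (ι × (Fin (m + 1) → ℕ)) R) ⊗[K] D)
    (hμext : ∀ r : R,
      eμ (algebraMap R (MvPolynomial (ι × (Fin (m + 1) → ℕ)) R) r) =
        Algebra.TensorProduct.map
          (IsScalarTower.toAlgHom K R (MvPolynomial (ι × (Fin (m + 1) → ℕ)) R))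
          (AlgHom.id K D) (e r))
    (hμvar : ∀ (i : ι) (θ : Fin (m + 1) → ℕ),
      eμ (X (i, θ)) =
        ∑ j : Fin (m + 1),
          (X (i, fun l => θ l + if l = j then 1 else 0) :
            MvPolynomial (ι × (Fin (m + 1) → ℕ)) R) ⊗ₜ[K] μ j) :
    ∃ ψ : MvPolynomial (ι × (Fin (m + 1) → ℕ)) R ≃ₐ[R]
        MvPolynomial (ι × (Fin (m + 1) → ℕ)) R,
      ∀ p : MvPolynomial (ι × (Fin (m + 1) → ℕ)) R,
        eμ (ψ p) =
          Algebra.TensorProduct.map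
            (AlgHom.restrictScalars K (ψ : MvPolynomial (ι × (Fin (m + 1) → ℕ)) R →ₐ[R]
              MvPolynomial (ι × (Fin (m + 1) → ℕ)) R))
            (AlgHom.id K D) (eε p) :=
  dStarPolynomial_basis_independent_general ε μ e ι eε hεext hεvar eμ hμext hμvar
end

section
/- (D*-reduction lemma) Let A ⊆ R{x̄}_{D*} \ R. Then for any g ∈ R{x̄}_{D*} there exist H, g₀ ∈ R{x̄}_{D*} such that H is a product of σ-transforms of initials and separants of elements of A, g₀ is reduced with respect to A, rk(g₀) ≤ rk(g), and H·g ≡ g₀ mod [A]_D, where [A]_D is the D-ideal generated by A. -/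
open MvPolynomial
open scoped BigOperators

/-- The variables `dᶿxⱼ` of the `D*`-polynomial ring in `n` indeterminates with `M`
operators: a pair (index of `x`, multi-exponent `θ ∈ ℕ^M`). -/
abbrev DVar (n M : ℕ) : Type := Fin n × (Fin M → ℕ)

/-- Applying the composite operator with multi-exponent `φ` to a variable. -/
def shiftVar {n M : ℕ} (u : DVar n M) (φ : Fin M → ℕ) : DVar n M :=
  (u.1, fun l => u.2 l + φ l)

/-- `φ` encodes a composition of the associated endomorphisms only (a `σ`-transform). -/
def IsSigmaExp {M : ℕ} (σset : Finset (Fin M)) (φ : Fin M → ℕ) : Prop :=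
  ∀ k, φ k ≠ 0 → k ∈ σset

/-- `φ` encodes a composition of operators involving at least one derivation-type
operator (a `δ`-transform). -/
def IsDeltaExp {M : ℕ} (σset : Finset (Fin M)) (φ : Fin M → ℕ) : Prop :=
  ∃ k, k ∉ σset ∧ φ k ≠ 0

/-- `u` is the leader of `f`: the highest-ranked variable occurring in `f`. -/
def IsLeader {R : Type} [CommRing R] {n M : ℕ} (lt : DVar n M → DVar n M → Prop)
    (f : MvPolynomial (DVar n M) R) (u : DVar n M) : Prop :=
  u ∈ f.vars ∧ ∀ v ∈ f.vars, v ≠ u → lt v u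

/-- `f` lies in (the image of) `R`, i.e. is a constant polynomial. -/
def IsConst {R : Type} [CommRing R] {n M : ℕ} (f : MvPolynomial (DVar n M) R) : Prop :=
  ∃ r : R, f = C r

/-- `g` is reduced with respect to `f`: `g` contains no `δ`-transform of the leader of
`f`, and every `σ`-transform of the leader of `f` occurs in `g` with degree `< deg f`. -/
def ReducedWrt {R : Type} [CommRing R] {n M : ℕ} (lt : DVar n M → DVar n M → Prop)
    (σset : Finset (Fin M)) (g f : MvPolynomial (DVar n M) R) : Prop :=
  ∀ u : DVar n M, IsLeader lt f u →
    (∀ φ : Fin M → ℕ, IsDeltaExp σset φ → shiftVar u φ ∉ g.vars) ∧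
    (∀ φ : Fin M → ℕ, IsSigmaExp σset φ →
      degreeOf (shiftVar u φ) g < degreeOf u f)

/-- `g` is reduced with respect to every element of `A`. -/
def ReducedWrtSet {R : Type} [CommRing R] {n M : ℕ} (lt : DVar n M → DVar n M → Prop)
    (σset : Finset (Fin M)) (g : MvPolynomial (DVar n M) R)
    (A : Set (MvPolynomial (DVar n M) R)) : Prop :=
  ∀ f ∈ A, ReducedWrt lt σset g f

/-- `A` is autoreduced: no element is constant and any two distinct elements are reduced
with respect to each other. -/
def Autoreduced {R : Type} [CommRing R] {n M : ℕ} (lt : DVar n M → DVar n M → Prop)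
    (σset : Finset (Fin M)) (A : Set (MvPolynomial (DVar n M) R)) : Prop :=
  (∀ f ∈ A, ¬ IsConst f) ∧
  ∀ f ∈ A, ∀ g ∈ A, f ≠ g → ReducedWrt lt σset g f

/-- `rk f < rk g`: the leader of `f` is below that of `g`, or they coincide and the
leading degree of `f` is smaller. -/
def RkLt {R : Type} [CommRing R] {n M : ℕ} (lt : DVar n M → DVar n M → Prop)
    (f g : MvPolynomial (DVar n M) R) : Prop :=
  ∃ uf ug, IsLeader lt f uf ∧ IsLeader lt g ug ∧
    (lt uf ug ∨ (uf = ug ∧ degreeOf uf f < degreeOf ug g))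

/-- `rk f = rk g`: same leader and same leading degree. -/
def RkEq {R : Type} [CommRing R] {n M : ℕ} (lt : DVar n M → DVar n M → Prop)
    (f g : MvPolynomial (DVar n M) R) : Prop :=
  ∃ uf ug, IsLeader lt f uf ∧ IsLeader lt g ug ∧ uf = ug ∧
    degreeOf uf f = degreeOf ug g

/-- `rk f ≤ rk g` (with constants of lowest rank). -/
def RkLe {R : Type} [CommRing R] {n M : ℕ} (lt : DVar n M → DVar n M → Prop)
    (f g : MvPolynomial (DVar n M) R) : Prop :=
  IsConst f ∨ RkLt lt f g ∨ RkEq lt f g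

/-- `lt` is a ranking of the variables, with `σ`-operators `σset` and operator ranks `ν`. -/
structure IsRanking {n M : ℕ} (lt : DVar n M → DVar n M → Prop)
    (σset : Finset (Fin M)) (ν : Fin M → ℕ) : Prop where
  trichot : ∀ u v, lt u v ∨ u = v ∨ lt v u
  irrefl : ∀ u, ¬ lt u u
  trans : ∀ u v w, lt u v → lt v w → lt u w
  wf : WellFounded lt
  lt_op : ∀ (u : DVar n M) (k : Fin M), lt u (shiftVar u (Pi.single k 1))
  mono : ∀ (u v : DVar n M) (k : Fin M), lt u v →
    lt (shiftVar u (Pi.single k 1)) (shiftVar v (Pi.single k 1))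
  op_ord : ∀ (u : DVar n M) (k k' : Fin M), ν k < ν k' →
    lt (shiftVar u (Pi.single k 1)) (shiftVar u (Pi.single k' 1))
  nu_sigma : ∀ k ∈ σset, ν k = 0

/-- The coordinate operators of a `D*`-ring structure (with respect to a ranked basis of
`D`) on a commutative `K`-algebra `A`: operators `δ k`, the subset `σset` of associated
endomorphisms, the map `fac` sending each operator to the associated endomorphism of its
local factor, operator ranks `ν`, and structure constants `α`, subject to additivity,
`K`-linearity, pairwise commutativity, multiplicativity and injectivity of the associated
endomorphisms, and the twisted Leibniz rule of the ranked basis. -/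
structure DStarOps (K : Type) [Field K] (A : Type) [CommRing A] [Algebra K A]
    (M : ℕ) where
  δ : Fin M → A → A
  σset : Finset (Fin M)
  fac : Fin M → Fin M
  ν : Fin M → ℕ
  α : Fin M → Fin M → Fin M → K
  map_add : ∀ (k : Fin M) (a b : A), δ k (a + b) = δ k a + δ k b
  map_smul : ∀ (k : Fin M) (c : K) (a : A), δ k (c • a) = c • δ k a
  comm : ∀ (k l : Fin M) (a : A), δ k (δ l a) = δ l (δ k a)
  fac_mem : ∀ k, fac k ∈ σset
  fac_sigma : ∀ k ∈ σset, fac k = k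
  sigma_one : ∀ k ∈ σset, δ k 1 = 1
  sigma_mul : ∀ k ∈ σset, ∀ a b : A, δ k (a * b) = δ k a * δ k b
  sigma_inj : ∀ k ∈ σset, Function.Injective (δ k)
  nu_sigma : ∀ k ∈ σset, ν k = 0
  nu_delta : ∀ k ∉ σset, 1 ≤ ν k
  prod_rule : ∀ k ∉ σset, ∀ a b : A,
    δ k (a * b) = δ k a * δ (fac k) b + δ (fac k) a * δ k b +
      ∑ pq ∈ Finset.univ.filter
          (fun pq : Fin M × Fin M =>
            pq.1 ∉ σset ∧ pq.2 ∉ σset ∧ fac pq.1 = fac k ∧ fac pq.2 = fac k ∧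
              ν pq.1 + ν pq.2 ≤ ν k),
        α k pq.1 pq.2 • (δ pq.1 a * δ pq.2 b)

variable {K : Type} [Field K] {A : Type} [CommRing A] [Algebra K A] {M : ℕ}

/-- Applying a composite of the operators along a list of indices. -/
def applyWord (op : DStarOps K A M) (w : List (Fin M)) (a : A) : A :=
  w.foldr (fun k x => op.δ k x) a

/-- `b` is a `σ`-transform of `a`: the image of `a` under a composition of the
associated endomorphisms. -/
def IsSigmaTransform (op : DStarOps K A M) (a b : A) : Prop :=
  ∃ w : List (Fin M), (∀ k ∈ w, k ∈ op.σset) ∧ b = applyWord op w a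

/-- An ideal closed under all the operators (a `D`-ideal). -/
def IsDIdeal (op : DStarOps K A M) (I : Ideal A) : Prop :=
  ∀ k : Fin M, ∀ a ∈ I, op.δ k a ∈ I

/-- A reflexive ideal: `a·σᵢ(a) ∈ I` implies `a ∈ I`. -/
def IsReflexive (op : DStarOps K A M) (I : Ideal A) : Prop :=
  ∀ k ∈ op.σset, ∀ a : A, a * op.δ k a ∈ I → a ∈ I

/-- A perfect `D`-ideal: a radical, reflexive `D`-ideal. -/
def IsPerfectDIdeal (op : DStarOps K A M) (I : Ideal A) : Prop :=
  IsDIdeal op I ∧ IsReflexive op I ∧ I.IsRadical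

/-- Membership in the `D`-ideal `[S]_D` generated by `S`. -/
def InDIdealGen (op : DStarOps K A M) (S : Set A) (a : A) : Prop :=
  ∀ I : Ideal A, S ⊆ I → IsDIdeal op I → a ∈ I

/-- Membership in the reflexive `D`-ideal `⟨S⟩_D` generated by `S`. -/
def InReflexiveDIdealGen (op : DStarOps K A M) (S : Set A) (a : A) : Prop :=
  ∀ I : Ideal A, S ⊆ I → IsDIdeal op I → IsReflexive op I → a ∈ I

/-- The initial of `f` with respect to the variable `u`: the leading coefficient of `f`
viewed as a univariate polynomial in `u`. -/
noncomputable def initialOf {R : Type} [CommRing R] {n M : ℕ} (u : DVar n M)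
    (f : MvPolynomial (DVar n M) R) : MvPolynomial (DVar n M) R :=
  ∑ d ∈ f.support.filter (fun d => d u = degreeOf u f),
    monomial (d.erase u) (coeff d f)

/-!
Reduction is pseudo-division, by well-founded induction on the degree function of `g`, compared
lexicographically from the top of the ranking. If `g` is not reduced with respect to `f ∈ A`
with leader `u`, some transform `θf` has a leading term `s·(θu)^e` with `e ≤ deg_{θu} g`, and
`s·g - c·θf`, with `c` the initial of `g` in `θu` times a power of `θu`, has smaller degree in
`θu` and no larger degree in any higher variable.

For a `σ`-transform `θ` (a ring endomorphism renaming the variables monotonically), `θf` has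
leading coefficient `θ(I_f)` in degree `deg_u f`. For a `δ`-transform, the twisted Leibniz rule
gives `δ_k f = σ(s_f)·δ_k u + (lower variables)`, `σ` the endomorphism of the local factor of
`δ_k`, and this linear shape survives any further operator, so the leading coefficient stays a
`σ`-transform of the separant.
-/

open MvPolynomial Function

theorem Finset.exists_rel_max {α : Type*} {r : α → α → Prop} [IsStrictTotalOrder α r]
    (S : Finset α) (hS : S.Nonempty) : ∃ u ∈ S, ∀ x ∈ S, x ≠ u → r x u := by
  obtain ⟨⟨u, hu⟩, -, hmax⟩ := (S.finite_toSet.wellFoundedOn (r := swap r)).has_min Set.univ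
    ⟨⟨_, hS.choose_spec⟩, trivial⟩
  refine ⟨u, hu, fun x hx hxu => ?_⟩
  rcases trichotomous_of r x u with h | h | h
  exacts [h, absurd h hxu, absurd h (hmax ⟨x, hx⟩ trivial)]

namespace MvPolynomial

variable {σ τ R S : Type*} [CommSemiring R] [CommSemiring S]

theorem X_mem_supported_of_mem {s : Set σ} {i : σ} (hi : i ∈ s) : X i ∈ supported R s :=
  Algebra.subset_adjoin ⟨i, hi, rfl⟩

theorem notMem_vars_of_mem_supported {s : Set σ} {p : MvPolynomial σ R}
    (hp : p ∈ supported R s) {i : σ} (hi : i ∉ s) : i ∉ p.vars :=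
  fun h => hi (mem_supported.1 hp h)

theorem degreeOf_eq_zero_of_mem_supported {s : Set σ} {p : MvPolynomial σ R}
    (hp : p ∈ supported R s) {i : σ} (hi : i ∉ s) : degreeOf i p = 0 :=
  not_not.1 fun h => notMem_vars_of_mem_supported hp hi (mem_vars_iff_degreeOf_ne_zero.2 h)

theorem smul_mem_supported {K : Type*} [CommSemiring K] [Algebra K R] {s : Set σ}
    {p : MvPolynomial σ R} (hp : p ∈ supported R s) (c : K) : c • p ∈ supported R s := by
  rw [← algebraMap_smul R]
  exact Subalgebra.smul_mem _ hp _

theorem pderiv_mem_supported {s : Set σ} {p : MvPolynomial σ R} (hp : p ∈ supported R s)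
    (i : σ) : pderiv i p ∈ supported R s := by
  classical
  induction hp using Algebra.adjoin_induction with
  | mem x hx =>
    obtain ⟨j, -, rfl⟩ := hx
    rw [pderiv_X, Pi.single_apply]
    split_ifs
    exacts [Subalgebra.one_mem _, Subalgebra.zero_mem _]
  | algebraMap r => simp
  | add a b _ _ ha hb => simpa using add_mem ha hb
  | mul a b ha hb iha ihb =>
    rw [pderiv_mul]
    exact add_mem (mul_mem iha hb) (mul_mem ha ihb)

theorem map_rename_mem_supported {s : Set σ} {t : Set τ} {p : MvPolynomial σ R}
    (hp : p ∈ supported R s) (f : R →+* S) {g : σ → τ} (hg : Set.MapsTo g s t) :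
    map f (rename g p) ∈ supported S t := by
  classical
  rw [mem_supported] at hp ⊢
  intro j hj
  obtain ⟨i, hi, rfl⟩ := Finset.mem_image.1 (vars_rename g p (vars_map _ _ hj))
  exact hg (hp hi)

theorem vars_subset_of_degreeOf_le
    {p q : MvPolynomial σ R} (h : ∀ i, degreeOf i p ≤ degreeOf i q) : p.vars ⊆ q.vars :=
  fun i hi => mem_vars_iff_degreeOf_ne_zero.2 fun hq =>
    mem_vars_iff_degreeOf_ne_zero.1 hi (Nat.eq_zero_of_le_zero (hq ▸ h i))

theorem degreeOf_map_le (f : R →+* S) (i : σ) (p : MvPolynomial σ R) :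
    degreeOf i (map f p) ≤ degreeOf i p := by
  classical
  simpa only [degreeOf_def] using Multiset.count_le_of_le i degrees_map_le

theorem degreeOf_X_pow_self_le (i : σ) (m : ℕ) : degreeOf i ((X i : MvPolynomial σ R) ^ m) ≤ m :=
  (degreeOf_pow_le i _ m).trans <| by simpa using Nat.mul_le_mul_left m (degreeOf_mul_X_self i 1)

end MvPolynomial

section DegreeLex

variable {σ R : Type*} [CommSemiring R]

def DegreeLex (r : σ → σ → Prop) (p q : MvPolynomial σ R) : Prop :=
  ∃ i, (∀ j, r i j → degreeOf j p = degreeOf j q) ∧ degreeOf i p < degreeOf i q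

variable {r : σ → σ → Prop} [IsStrictTotalOrder σ r]

theorem DegreeLex.trans {p q s : MvPolynomial σ R} (h₁ : DegreeLex r p q)
    (h₂ : DegreeLex r q s) : DegreeLex r p s := by
  obtain ⟨i, hi, hpq⟩ := h₁
  obtain ⟨j, hj, hqs⟩ := h₂
  rcases trichotomous_of r i j with h | rfl | h
  · exact ⟨j, fun k hk => (hi k (trans_of r h hk)).trans (hj k hk), (hi j h).trans_lt hqs⟩
  · exact ⟨i, fun k hk => (hi k hk).trans (hj k hk), hpq.trans hqs⟩
  · exact ⟨i, fun k hk => (hi k hk).trans (hj k (trans_of r h hk)), hpq.trans_eq (hj i h)⟩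

theorem degreeLex_wellFounded (hwf : WellFounded r) :
    WellFounded (DegreeLex r : MvPolynomial σ R → MvPolynomial σ R → Prop) :=
  InvImage.wf
    (fun p => (⟨p.vars, (degreeOf · p), fun _ => mem_vars_iff_degreeOf_ne_zero⟩ : σ →₀ ℕ))
    (Finsupp.Lex.wellFounded' (fun n => n.not_lt_zero) wellFounded_lt hwf)

theorem degreeLex_of_degreeOf_lt {p q : MvPolynomial σ R} {v : σ}
    (hv : degreeOf v p < degreeOf v q) (habove : ∀ w, r v w → degreeOf w p ≤ degreeOf w q) :
    DegreeLex r p q := by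
  classical
  set D := (p.vars ∪ q.vars).filter fun w => degreeOf w p ≠ degreeOf w q
  have mem_D : ∀ w, degreeOf w p ≠ degreeOf w q → w ∈ D := by
    intro w hw
    refine Finset.mem_filter.2 ⟨?_, hw⟩
    by_cases hp : degreeOf w p = 0
    · exact Finset.mem_union_right _ (mem_vars_iff_degreeOf_ne_zero.2 (hp ▸ hw.symm))
    · exact Finset.mem_union_left _ (mem_vars_iff_degreeOf_ne_zero.2 hp)
  obtain ⟨i, hiD, hmax⟩ := D.exists_rel_max (r := r) ⟨v, mem_D v hv.ne⟩
  refine ⟨i, fun j hij => not_not.1 fun hj => ?_, ?_⟩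
  · exact irrefl_of r i (trans_of r hij (hmax j (mem_D j hj) (ne_of_irrefl' hij)))
  · rcases trichotomous_of r v i with h | rfl | h
    · exact (habove i h).lt_of_ne (Finset.mem_filter.1 hiD).2
    · exact hv
    · exact absurd (hmax v (mem_D v hv.ne) (ne_of_irrefl' h)) (asymm h)

end DegreeLex

namespace DStarOps

variable {K A : Type} [Field K] [CommRing A] [Algebra K A] {M : ℕ} (op : DStarOps K A M)

theorem delta_zero (k : Fin M) : op.δ k 0 = 0 := by
  simpa using op.map_add k 0 0

def sigmaHom (k : Fin M) (hk : k ∈ op.σset) : A →+* A where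
  toFun := op.δ k
  map_one' := op.sigma_one k hk
  map_mul' := op.sigma_mul k hk
  map_zero' := op.delta_zero k
  map_add' := op.map_add k

theorem nu_fac_lt {k : Fin M} (hk : k ∉ op.σset) : op.ν (op.fac k) < op.ν k := by
  rw [op.nu_sigma _ (op.fac_mem k)]
  exact op.nu_delta k hk

theorem fac_eq_or_nu_fac_lt (k : Fin M) : op.fac k = k ∨ op.ν (op.fac k) < op.ν k := by
  by_cases hk : k ∈ op.σset
  exacts [Or.inl (op.fac_sigma k hk), Or.inr (op.nu_fac_lt hk)]

theorem nu_lt_of_mem_prod_rule {k : Fin M} {pq : Fin M × Fin M}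
    (h : pq ∈ Finset.univ.filter fun pq : Fin M × Fin M =>
      pq.1 ∉ op.σset ∧ pq.2 ∉ op.σset ∧ op.fac pq.1 = op.fac k ∧ op.fac pq.2 = op.fac k ∧
        op.ν pq.1 + op.ν pq.2 ≤ op.ν k) :
    op.ν pq.1 < op.ν k ∧ op.ν pq.2 < op.ν k := by
  obtain ⟨h₁, h₂, -, -, hle⟩ := (Finset.mem_filter.1 h).2
  have := op.nu_delta _ h₁
  have := op.nu_delta _ h₂
  omega

@[simp]
theorem applyWord_nil (a : A) : applyWord op [] a = a := rfl

@[simp]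
theorem applyWord_cons (k : Fin M) (w : List (Fin M)) (a : A) :
    applyWord op (k :: w) a = op.δ k (applyWord op w a) := rfl

theorem applyWord_append (w₁ w₂ : List (Fin M)) (a : A) :
    applyWord op (w₁ ++ w₂) a = applyWord op w₁ (applyWord op w₂ a) :=
  List.foldr_append

theorem applyWord_mem {I : Ideal A} (hI : IsDIdeal op I) (w : List (Fin M)) {a : A}
    (ha : a ∈ I) : applyWord op w a ∈ I := by
  induction w with
  | nil => exact ha
  | cons k w ih => exact hI k _ ih

theorem isSigmaTransform_refl (a : A) : IsSigmaTransform op a a :=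
  ⟨[], by simp, rfl⟩

theorem isSigmaTransform_delta {k : Fin M} (hk : k ∈ op.σset) (a : A) :
    IsSigmaTransform op a (op.δ k a) :=
  ⟨[k], by simpa using hk, rfl⟩

theorem _root_.IsSigmaTransform.trans {op : DStarOps K A M} {a b c : A}
    (h₁ : IsSigmaTransform op a b) (h₂ : IsSigmaTransform op b c) : IsSigmaTransform op a c := by
  obtain ⟨w₁, hw₁, rfl⟩ := h₁
  obtain ⟨w₂, hw₂, rfl⟩ := h₂
  refine ⟨w₂ ++ w₁, fun k hk => ?_, (op.applyWord_append w₂ w₁ a).symm⟩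
  rcases List.mem_append.1 hk with hk | hk
  exacts [hw₂ k hk, hw₁ k hk]

def transforms (S : Set A) : Set A :=
  {b | ∃ f ∈ S, ∃ w, b = applyWord op w f}

theorem inDIdealGen_of_mem_span {S : Set A} {a : A} (h : a ∈ Ideal.span (op.transforms S)) :
    InDIdealGen op S a := fun _ hSI hI =>
  Ideal.span_le.2 (by rintro _ ⟨f, hf, w, rfl⟩; exact op.applyWord_mem hI w (hSI hf)) h

end DStarOps

section ShiftVar

variable {n M : ℕ}

theorem shiftVar_shiftVar (u : DVar n M) (φ ψ : Fin M → ℕ) :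
    shiftVar (shiftVar u φ) ψ = shiftVar u (φ + ψ) := by
  simp only [shiftVar, Pi.add_apply, add_assoc]

@[simp]
theorem shiftVar_zero (u : DVar n M) : shiftVar u 0 = u := by
  simp [shiftVar]

theorem shiftVar_injective (φ : Fin M → ℕ) : Injective (shiftVar · φ : DVar n M → DVar n M) := by
  rintro ⟨i, θ⟩ ⟨j, θ'⟩ h
  simp only [shiftVar, Prod.mk.injEq] at h
  exact Prod.ext h.1 (funext fun l => Nat.add_right_cancel (congrFun h.2 l))

def wordExp (w : List (Fin M)) : Fin M → ℕ := fun k => w.count k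

@[simp]
theorem wordExp_nil : wordExp ([] : List (Fin M)) = 0 := rfl

theorem wordExp_cons (k : Fin M) (w : List (Fin M)) :
    wordExp (k :: w) = wordExp w + Pi.single k 1 := by
  funext l
  by_cases h : l = k
  · subst h; simp [wordExp]
  · simp [wordExp, h, Ne.symm h]

theorem wordExp_ne_zero_of_mem {w : List (Fin M)} {k : Fin M} (h : k ∈ w) : wordExp w k ≠ 0 :=
  (List.count_pos_iff.2 h).ne'

theorem exists_wordExp_eq (φ : Fin M → ℕ) : ∃ w : List (Fin M), wordExp w = φ := by
  classical
  refine ⟨(Finsupp.equivFunOnFinite.symm φ).toMultiset.toList, funext fun k => ?_⟩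
  simp [wordExp, ← Multiset.coe_count]

end ShiftVar

section Ranking

variable {R : Type} [CommRing R] {n M : ℕ} {lt : DVar n M → DVar n M → Prop}
  {σs : Finset (Fin M)} {ν : Fin M → ℕ}

theorem IsRanking.isStrictTotalOrder (hr : IsRanking lt σs ν) :
    IsStrictTotalOrder (DVar n M) lt where
  trichotomous a b h₁ h₂ := ((hr.trichot a b).resolve_left h₁).resolve_right h₂
  irrefl := hr.irrefl
  trans := hr.trans

theorem IsRanking.shiftVar_lt_shiftVar (hr : IsRanking lt σs ν) {x y : DVar n M} (h : lt x y)
    (φ : Fin M → ℕ) : lt (shiftVar x φ) (shiftVar y φ) := by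
  obtain ⟨w, rfl⟩ := exists_wordExp_eq φ
  induction w with
  | nil => simpa using h
  | cons k w ih =>
    rw [wordExp_cons, ← shiftVar_shiftVar, ← shiftVar_shiftVar]
    exact hr.mono _ _ _ ih

theorem IsRanking.shiftVar_single_lt (hr : IsRanking lt σs ν) {z v : DVar n M}
    (hz : lt z v ∨ z = v) {p k : Fin M} (hp : ν p < ν k) :
    lt (shiftVar z (Pi.single p 1)) (shiftVar v (Pi.single k 1)) := by
  rcases hz with hz | rfl
  · exact hr.trans _ _ _ (hr.mono _ _ _ hz) (hr.op_ord _ _ _ hp)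
  · exact hr.op_ord _ _ _ hp

theorem IsRanking.exists_isLeader (hr : IsRanking lt σs ν) {p : MvPolynomial (DVar n M) R}
    (hp : p.vars.Nonempty) : ∃ u, IsLeader lt p u :=
  have := hr.isStrictTotalOrder
  let ⟨u, hu, hmax⟩ := p.vars.exists_rel_max (r := lt) hp
  ⟨u, hu, hmax⟩

theorem IsLeader.lt_or_eq {f : MvPolynomial (DVar n M) R} {u x : DVar n M}
    (h : IsLeader lt f u) (hx : x ∈ f.vars) : lt x u ∨ x = u := by
  by_cases hxu : x = u
  exacts [Or.inr hxu, Or.inl (h.2 x hx hxu)]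

theorem IsLeader.mem_supported {f : MvPolynomial (DVar n M) R} {u : DVar n M}
    (h : IsLeader lt f u) : f ∈ supported R {y | lt y u ∨ y = u} :=
  MvPolynomial.mem_supported.2 fun _ => h.lt_or_eq

theorem IsLeader.degreeOf_pos {f : MvPolynomial (DVar n M) R} {u : DVar n M}
    (h : IsLeader lt f u) : 0 < degreeOf u f :=
  Nat.pos_of_ne_zero (mem_vars_iff_degreeOf_ne_zero.1 h.1)

theorem IsRanking.rkLe_refl (hr : IsRanking lt σs ν) (g : MvPolynomial (DVar n M) R) :
    RkLe lt g g := by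
  rcases g.vars.eq_empty_or_nonempty with h | h
  · exact Or.inl ⟨_, vars_eq_empty_iff_eq_C.1 h⟩
  · obtain ⟨u, hu⟩ := hr.exists_isLeader h
    exact Or.inr (Or.inr ⟨u, u, hu, hu, rfl, rfl⟩)

theorem IsRanking.rkLe_of_degreeLex (hr : IsRanking lt σs ν) {g₀ g : MvPolynomial (DVar n M) R}
    (h : DegreeLex lt g₀ g) : RkLe lt g₀ g := by
  have := hr.isStrictTotalOrder
  rcases g₀.vars.eq_empty_or_nonempty with h₀ | h₀
  · exact Or.inl ⟨_, vars_eq_empty_iff_eq_C.1 h₀⟩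
  obtain ⟨u₀, hu₀⟩ := hr.exists_isLeader h₀
  obtain ⟨i, habove, hi⟩ := h
  have hig : i ∈ g.vars := mem_vars_iff_degreeOf_ne_zero.2 (by omega)
  obtain ⟨u, hu⟩ := hr.exists_isLeader ⟨i, hig⟩
  right
  rcases hr.trichot u₀ u with h | rfl | h
  · exact Or.inl ⟨u₀, u, hu₀, hu, Or.inl h⟩
  · rcases hu.lt_or_eq hig with hiu | rfl
    · exact Or.inr ⟨u₀, u₀, hu₀, hu, rfl, habove u₀ hiu⟩
    · exact Or.inl ⟨i, i, hu₀, hu, Or.inr ⟨rfl, hi⟩⟩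
  · -- `i ≤ u < u₀`, so `g` would contain `u₀` above its leader
    have hiu₀ : lt i u₀ := (hu.lt_or_eq hig).elim (hr.trans _ _ _ · h) (· ▸ h)
    have hu₀g : u₀ ∈ g.vars :=
      mem_vars_iff_degreeOf_ne_zero.2 (habove u₀ hiu₀ ▸ mem_vars_iff_degreeOf_ne_zero.1 hu₀.1)
    exact absurd (hu.2 u₀ hu₀g (ne_of_irrefl' h)) (asymm h)

end Ranking

section InitialTail

variable {R : Type} [CommRing R] {n M : ℕ}

noncomputable def tailOf (v : DVar n M) (p : MvPolynomial (DVar n M) R) :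
    MvPolynomial (DVar n M) R :=
  ∑ d ∈ p.support.filter (fun d => d v ≠ degreeOf v p), monomial d (coeff d p)

theorem initialOf_mul_X_pow_add_tailOf (v : DVar n M) (p : MvPolynomial (DVar n M) R) :
    initialOf v p * X v ^ degreeOf v p + tailOf v p = p := by
  classical
  have hinit : initialOf v p * X v ^ degreeOf v p
      = ∑ d ∈ p.support.filter (fun d => d v = degreeOf v p), monomial d (coeff d p) := by
    rw [initialOf, X_pow_eq_monomial, Finset.sum_mul]
    refine Finset.sum_congr rfl fun d hd => ?_
    rw [monomial_mul, mul_one, ← (Finset.mem_filter.1 hd).2, Finsupp.erase_add_single]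
  rw [hinit, tailOf, Finset.sum_filter_add_sum_filter_not, support_sum_monomial_coeff]

theorem mem_support_of_mem_support_tailOf {v : DVar n M} {p : MvPolynomial (DVar n M) R}
    {d : DVar n M →₀ ℕ} (hd : d ∈ (tailOf v p).support) :
    d ∈ p.support ∧ d v ≠ degreeOf v p := by
  classical
  obtain ⟨d', hd', hdd'⟩ := Finset.mem_biUnion.1 (support_sum hd)
  rw [Finset.mem_singleton.1 (support_monomial_subset hdd')]
  exact Finset.mem_filter.1 hd'

theorem exists_mem_support_of_mem_support_initialOf {v : DVar n M}
    {p : MvPolynomial (DVar n M) R} {d : DVar n M →₀ ℕ} (hd : d ∈ (initialOf v p).support) :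
    ∃ d' ∈ p.support, d = d'.erase v := by
  classical
  obtain ⟨d', hd', hdd'⟩ := Finset.mem_biUnion.1 (support_sum hd)
  exact ⟨d', (Finset.mem_filter.1 hd').1, Finset.mem_singleton.1 (support_monomial_subset hdd')⟩

theorem degreeOf_initialOf_self (v : DVar n M) (p : MvPolynomial (DVar n M) R) :
    degreeOf v (initialOf v p) = 0 :=
  Nat.eq_zero_of_le_zero <| degreeOf_le_iff.2 fun d hd => by
    obtain ⟨d', -, rfl⟩ := exists_mem_support_of_mem_support_initialOf hd
    simp

theorem degreeOf_initialOf_le (v w : DVar n M) (p : MvPolynomial (DVar n M) R) :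
    degreeOf w (initialOf v p) ≤ degreeOf w p :=
  degreeOf_le_iff.2 fun d hd => by
    obtain ⟨d', hd', rfl⟩ := exists_mem_support_of_mem_support_initialOf hd
    refine le_trans ?_ (monomial_le_degreeOf w hd')
    rw [Finsupp.erase_apply]
    split_ifs <;> simp

theorem degreeOf_tailOf_le (v w : DVar n M) (p : MvPolynomial (DVar n M) R) :
    degreeOf w (tailOf v p) ≤ degreeOf w p :=
  degreeOf_le_iff.2 fun _ hd => monomial_le_degreeOf w (mem_support_of_mem_support_tailOf hd).1

theorem degreeOf_tailOf_lt {v : DVar n M} {p : MvPolynomial (DVar n M) R}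
    (h : 0 < degreeOf v p) : degreeOf v (tailOf v p) < degreeOf v p :=
  (degreeOf_lt_iff h).2 fun _ hd =>
    have hd := mem_support_of_mem_support_tailOf hd
    (monomial_le_degreeOf v hd.1).lt_of_ne hd.2

variable {lt : DVar n M → DVar n M → Prop}

theorem IsLeader.initialOf_mem_supported {f : MvPolynomial (DVar n M) R} {u : DVar n M}
    (h : IsLeader lt f u) : initialOf u f ∈ supported R {y | lt y u} := by
  refine MvPolynomial.mem_supported.2 fun x hx => ?_
  refine (h.lt_or_eq (vars_subset_of_degreeOf_le (degreeOf_initialOf_le u · f) hx)).resolve_right ?_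
  rintro rfl
  exact mem_vars_iff_degreeOf_ne_zero.1 hx (degreeOf_initialOf_self x f)

theorem IsLeader.tailOf_mem_supported {f : MvPolynomial (DVar n M) R} {u : DVar n M}
    (h : IsLeader lt f u) : tailOf u f ∈ supported R {y | lt y u ∨ y = u} :=
  MvPolynomial.mem_supported.2 fun _ hx =>
    h.lt_or_eq (vars_subset_of_degreeOf_le (degreeOf_tailOf_le u · f) hx)

end InitialTail

section LeadingTerm

variable {R : Type} [CommRing R] {n M : ℕ} {lt : DVar n M → DVar n M → Prop}
  {σs : Finset (Fin M)} {ν : Fin M → ℕ}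

structure HasLeadingTerm (lt : DVar n M → DVar n M → Prop) (p s : MvPolynomial (DVar n M) R)
    (v : DVar n M) (e : ℕ) : Prop where
  coeff_mem : s ∈ supported R {y | lt y v}
  sub_mem : p - s * X v ^ e ∈ supported R {y | lt y v ∨ y = v}
  degreeOf_sub_lt : degreeOf v (p - s * X v ^ e) < e

theorem HasLeadingTerm.of_linear (hr : IsRanking lt σs ν) {s T : MvPolynomial (DVar n M) R}
    {v : DVar n M} (hs : s ∈ supported R {y | lt y v}) (hT : T ∈ supported R {y | lt y v}) :
    HasLeadingTerm lt (s * X v + T) s v 1 := by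
  have hsub : s * X v + T - s * X v ^ 1 = T := by ring
  refine ⟨hs, ?_, ?_⟩
  · rw [hsub]
    exact supported_mono (fun _ => Or.inl) hT
  · rw [hsub, degreeOf_eq_zero_of_mem_supported hT (hr.irrefl v)]
    exact Nat.one_pos

theorem HasLeadingTerm.exists_degreeLex (hr : IsRanking lt σs ν)
    {p s g : MvPolynomial (DVar n M) R} {v : DVar n M} {e : ℕ} (h : HasLeadingTerm lt p s v e)
    (he : e ≤ degreeOf v g) : ∃ c, DegreeLex lt (s * g - c * p) g := by
  have := hr.isStrictTotalOrder
  set D := degreeOf v g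
  set c := initialOf v g
  set rest := p - s * X v ^ e
  have hrest : degreeOf v rest < e := h.degreeOf_sub_lt
  have hpow : (X v : MvPolynomial (DVar n M) R) ^ D = X v ^ (D - e) * X v ^ e := by
    rw [← pow_add, Nat.sub_add_cancel he]
  -- the leading parts `s·c·v^D` of `s·g` and of `c·v^(D-e)·p` cancel
  have key : s * g - c * X v ^ (D - e) * p = s * tailOf v g - c * X v ^ (D - e) * rest := by
    linear_combination (-s) * initialOf_mul_X_pow_add_tailOf v g + (s * c) * hpow
  refine ⟨c * X v ^ (D - e), degreeLex_of_degreeOf_lt (v := v) ?_ fun w hw => ?_⟩ <;> rw [key]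
  · have h₁ : degreeOf v (s * tailOf v g) < D := by
      refine (degreeOf_mul_le _ _ _).trans_lt ?_
      rw [degreeOf_eq_zero_of_mem_supported h.coeff_mem (hr.irrefl v), zero_add]
      exact degreeOf_tailOf_lt (by omega)
    have h₂ : degreeOf v (c * X v ^ (D - e) * rest) < D := by
      have := degreeOf_mul_le v (c * X v ^ (D - e)) rest
      have := degreeOf_mul_le v c (X v ^ (D - e))
      have := degreeOf_X_pow_self_le (R := R) v (D - e)
      have : degreeOf v c = 0 := degreeOf_initialOf_self v g
      have : D - e + e = D := Nat.sub_add_cancel he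
      omega
    exact (degreeOf_sub_le _ _ _).trans_lt (max_lt h₁ h₂)
  · have hs : degreeOf w s = 0 :=
      degreeOf_eq_zero_of_mem_supported h.coeff_mem (asymm hw)
    have hrest : degreeOf w rest = 0 :=
      degreeOf_eq_zero_of_mem_supported h.sub_mem (not_or.2 ⟨asymm hw, ne_of_irrefl' hw⟩)
    have h₁ : degreeOf w (s * tailOf v g) ≤ degreeOf w g :=
      (degreeOf_mul_le _ _ _).trans (by rw [hs, zero_add]; exact degreeOf_tailOf_le v w g)
    have h₂ : degreeOf w (c * X v ^ (D - e) * rest) ≤ degreeOf w g := by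
      refine (degreeOf_mul_le _ _ _).trans ?_
      refine (Nat.add_le_add_right (degreeOf_mul_le _ _ _) _).trans ?_
      rw [hrest, degreeOf_X_pow_of_ne _ (ne_of_irrefl' hw), add_zero, add_zero]
      exact degreeOf_initialOf_le v w g
    exact (degreeOf_sub_le _ _ _).trans (max_le h₁ h₂)

end LeadingTerm

namespace DStarOps

variable {K R : Type} [Field K] [CommRing R] [Algebra K R] {n M : ℕ}

structure IsDPolynomialRing (op : DStarOps K (MvPolynomial (DVar n M) R) M) : Prop where
  map_X : ∀ (k : Fin M) (u : DVar n M), op.δ k (X u) = X (shiftVar u (Pi.single k 1))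
  map_C : ∀ (k : Fin M) (r : R), ∃ r' : R, op.δ k (C r) = C r'

def opShifts (op : DStarOps K (MvPolynomial (DVar n M) R) M) (j : Fin M)
    (V : Set (DVar n M)) : Set (DVar n M) :=
  {y | ∃ w ∈ V, ∃ p, (p = j ∨ op.ν p < op.ν j) ∧ y = shiftVar w (Pi.single p 1)}

def IsSigmaTransformOfInitialOrSeparant (op : DStarOps K (MvPolynomial (DVar n M) R) M)
    (lt : DVar n M → DVar n M → Prop) (f h : MvPolynomial (DVar n M) R) : Prop :=
  ∃ u, IsLeader lt f u ∧
    (IsSigmaTransform op (initialOf u f) h ∨ IsSigmaTransform op (pderiv u f) h)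

variable {op : DStarOps K (MvPolynomial (DVar n M) R) M} {lt : DVar n M → DVar n M → Prop}

theorem opShifts_mono {p j : Fin M} (h : op.ν p < op.ν j) (V : Set (DVar n M)) :
    op.opShifts p V ⊆ op.opShifts j V := by
  rintro _ ⟨w, hw, q, hq, rfl⟩
  exact ⟨w, hw, q, Or.inr (hq.elim (· ▸ h) (·.trans h)), rfl⟩

namespace IsDPolynomialRing

theorem delta_mem_supported (hop : op.IsDPolynomialRing) {V : Set (DVar n M)}
    {q : MvPolynomial (DVar n M) R} (hq : q ∈ supported R V) (j : Fin M) :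
    op.δ j q ∈ supported R (op.opShifts j V) := by
  revert j
  induction hq using Algebra.adjoin_induction with
  | mem x hx =>
    obtain ⟨w, hw, rfl⟩ := hx
    intro j
    rw [hop.map_X]
    exact X_mem_supported_of_mem ⟨w, hw, j, Or.inl rfl, rfl⟩
  | algebraMap r =>
    intro j
    obtain ⟨r', h⟩ := hop.map_C j r
    rw [algebraMap_eq, h]
    exact Subalgebra.algebraMap_mem _ r'
  | add a b _ _ ha hb =>
    intro j
    rw [op.map_add]
    exact add_mem (ha j) (hb j)
  | mul a b _ _ ha hb =>
    intro j
    by_cases hj : j ∈ op.σset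
    · rw [op.sigma_mul j hj]
      exact mul_mem (ha j) (hb j)
    have hfac := supported_mono (R := R) (opShifts_mono (op.nu_fac_lt hj) V)
    rw [op.prod_rule j hj]
    refine add_mem (add_mem (mul_mem (ha j) (hfac (hb _))) (mul_mem (hfac (ha _)) (hb j)))
      (sum_mem fun pq hpq => smul_mem_supported (mul_mem ?_ ?_) _)
    · exact supported_mono (opShifts_mono (op.nu_lt_of_mem_prod_rule hpq).1 V) (ha _)
    · exact supported_mono (opShifts_mono (op.nu_lt_of_mem_prod_rule hpq).2 V) (hb _)

theorem delta_mem_supported_lt (hop : op.IsDPolynomialRing) (hr : IsRanking lt op.σset op.ν)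
    {v : DVar n M} {q : MvPolynomial (DVar n M) R} (hq : q ∈ supported R {y | lt y v})
    {j k : Fin M} (hj : j = k ∨ op.ν j < op.ν k) :
    op.δ j q ∈ supported R {y | lt y (shiftVar v (Pi.single k 1))} := by
  refine supported_mono ?_ (hop.delta_mem_supported hq j)
  rintro _ ⟨z, hz, p, hp, rfl⟩
  rcases hj with rfl | hj
  · rcases hp with rfl | hp
    exacts [hr.mono _ _ _ hz, hr.shiftVar_single_lt (Or.inl hz) hp]
  · exact hr.shiftVar_single_lt (Or.inl hz) (hp.elim (· ▸ hj) (·.trans hj))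

theorem delta_mem_supported_le (hop : op.IsDPolynomialRing) (hr : IsRanking lt op.σset op.ν)
    {v : DVar n M} {q : MvPolynomial (DVar n M) R} (hq : q ∈ supported R {y | lt y v ∨ y = v})
    {j k : Fin M} (hj : op.ν j < op.ν k) :
    op.δ j q ∈ supported R {y | lt y (shiftVar v (Pi.single k 1))} := by
  refine supported_mono ?_ (hop.delta_mem_supported hq j)
  rintro _ ⟨z, hz, p, hp, rfl⟩
  exact hr.shiftVar_single_lt hz (hp.elim (· ▸ hj) (·.trans hj))

/-- The twisted chain rule: up to variables below `δ_k u`, `δ_k f = σ(∂f/∂u) · δ_k u`, where `σ`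
is the endomorphism of the local factor of `δ_k`. -/
theorem delta_sub_mem_supported (hop : op.IsDPolynomialRing) (hr : IsRanking lt op.σset op.ν)
    {k : Fin M} (hk : k ∉ op.σset) {u : DVar n M} {f : MvPolynomial (DVar n M) R}
    (hf : f ∈ supported R {y | lt y u ∨ y = u}) :
    op.δ k f - op.δ (op.fac k) (pderiv u f) * X (shiftVar u (Pi.single k 1)) ∈
      supported R {y | lt y (shiftVar u (Pi.single k 1))} := by
  classical
  have hσ := op.fac_mem k
  induction hf using Algebra.adjoin_induction with
  | mem x hx =>
    obtain ⟨w, hw, rfl⟩ := hx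
    rw [hop.map_X, pderiv_X, Pi.single_apply]
    split_ifs with hwu
    · rw [hwu, op.sigma_one _ hσ, one_mul, sub_self]
      exact zero_mem _
    · rw [op.delta_zero, zero_mul, sub_zero]
      exact X_mem_supported_of_mem (hr.mono _ _ _ (hw.resolve_right hwu))
  | algebraMap r =>
    obtain ⟨r', h⟩ := hop.map_C k r
    rw [algebraMap_eq, h, pderiv_C, op.delta_zero, zero_mul, sub_zero]
    exact Subalgebra.algebraMap_mem _ r'
  | add a b _ _ ha hb =>
    rw [op.map_add, _root_.map_add, op.map_add]
    convert add_mem ha hb using 1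
    ring
  | mul a b ha' hb' ha hb =>
    rw [op.prod_rule k hk, add_sub_right_comm, pderiv_mul, op.map_add, op.sigma_mul _ hσ,
      op.sigma_mul _ hσ]
    refine add_mem ?_ (sum_mem fun pq hpq => smul_mem_supported (mul_mem ?_ ?_) _)
    · convert add_mem (mul_mem ha (hop.delta_mem_supported_le hr hb' (op.nu_fac_lt hk)))
        (mul_mem (hop.delta_mem_supported_le hr ha' (op.nu_fac_lt hk)) hb) using 1
      ring
    · exact hop.delta_mem_supported_le hr ha' (op.nu_lt_of_mem_prod_rule hpq).1
    · exact hop.delta_mem_supported_le hr hb' (op.nu_lt_of_mem_prod_rule hpq).2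

theorem exists_delta_mul_X_add_eq (hop : op.IsDPolynomialRing) (hr : IsRanking lt op.σset op.ν)
    {v : DVar n M} {s T : MvPolynomial (DVar n M) R} (hs : s ∈ supported R {y | lt y v})
    (hT : T ∈ supported R {y | lt y v}) (k : Fin M) :
    ∃ T' ∈ supported R {y | lt y (shiftVar v (Pi.single k 1))},
      op.δ k (s * X v + T) = op.δ (op.fac k) s * X (shiftVar v (Pi.single k 1)) + T' := by
  by_cases hk : k ∈ op.σset
  · refine ⟨op.δ k T, hop.delta_mem_supported_lt hr hT (Or.inl rfl), ?_⟩
    rw [op.fac_sigma k hk, op.map_add, op.sigma_mul k hk, hop.map_X]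
  · have hpderiv : pderiv v (s * X v + T) = s := by
      rw [_root_.map_add, pderiv_mul, pderiv_X_self,
        pderiv_eq_zero_of_notMem_vars (notMem_vars_of_mem_supported hs (hr.irrefl v)),
        pderiv_eq_zero_of_notMem_vars (notMem_vars_of_mem_supported hT (hr.irrefl v))]
      ring
    have hle : s * X v + T ∈ supported R {y | lt y v ∨ y = v} :=
      add_mem (mul_mem (supported_mono (fun _ => Or.inl) hs) (X_mem_supported_of_mem (Or.inr rfl)))
        (supported_mono (fun _ => Or.inl) hT)
    refine ⟨_, hop.delta_sub_mem_supported hr hk hle, ?_⟩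
    rw [hpderiv]
    ring

theorem exists_applyWord_mul_X_add_eq (hop : op.IsDPolynomialRing) (hr : IsRanking lt op.σset op.ν)
    {v : DVar n M} {s T : MvPolynomial (DVar n M) R} (hs : s ∈ supported R {y | lt y v})
    (hT : T ∈ supported R {y | lt y v}) (w : List (Fin M)) :
    ∃ s' T', applyWord op w (s * X v + T) = s' * X (shiftVar v (wordExp w)) + T' ∧
      IsSigmaTransform op s s' ∧ s' ∈ supported R {y | lt y (shiftVar v (wordExp w))} ∧
      T' ∈ supported R {y | lt y (shiftVar v (wordExp w))} := by
  induction w with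
  | nil => exact ⟨s, T, by simp, op.isSigmaTransform_refl s, by simpa using hs, by simpa using hT⟩
  | cons k w ih =>
    obtain ⟨s', T', heq, hss', hs', hT'⟩ := ih
    obtain ⟨T'', hT'', heq'⟩ := hop.exists_delta_mul_X_add_eq hr hs' hT' k
    rw [wordExp_cons, ← shiftVar_shiftVar]
    exact ⟨_, T'', by rw [applyWord_cons, heq, heq'],
      IsSigmaTransform.trans hss' (op.isSigmaTransform_delta (op.fac_mem k) s'),
      hop.delta_mem_supported_lt hr hs' (op.fac_eq_or_nu_fac_lt k), hT''⟩

theorem exists_delta_transform (hop : op.IsDPolynomialRing) (hr : IsRanking lt op.σset op.ν)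
    {f : MvPolynomial (DVar n M) R} {u : DVar n M} (hu : IsLeader lt f u) {φ : Fin M → ℕ}
    (hφ : IsDeltaExp op.σset φ) :
    ∃ w s, IsSigmaTransform op (pderiv u f) s ∧
      HasLeadingTerm lt (applyWord op w f) s (shiftVar u φ) 1 := by
  obtain ⟨k, hk, hφk⟩ := hφ
  obtain ⟨w, hw⟩ := exists_wordExp_eq (φ - Pi.single k 1)
  have hf := hu.mem_supported
  obtain ⟨s, T, heq, hs₀s, hs, hT⟩ := hop.exists_applyWord_mul_X_add_eq hr
    (hop.delta_mem_supported_le hr (pderiv_mem_supported hf u) (op.nu_fac_lt hk))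
    (hop.delta_sub_mem_supported hr hk hf) w
  have hexp : shiftVar (shiftVar u (Pi.single k 1)) (wordExp w) = shiftVar u φ := by
    rw [shiftVar_shiftVar, hw]
    congr 1
    funext j
    by_cases hj : j = k
    · subst hj; simp; omega
    · simp [hj]
  rw [hexp] at heq hs hT
  rw [add_sub_cancel] at heq
  refine ⟨w ++ [k], s, IsSigmaTransform.trans (op.isSigmaTransform_delta (op.fac_mem k) _) hs₀s, ?_⟩
  rw [applyWord_append]
  exact heq ▸ HasLeadingTerm.of_linear hr hs hT

theorem exists_delta_eq_map_rename (hop : op.IsDPolynomialRing) {k : Fin M} (hk : k ∈ op.σset) :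
    ∃ τ : R →+* R, ∀ p, op.δ k p = map τ (rename (shiftVar · (Pi.single k 1)) p) := by
  set τ : R →+* R := constantCoeff.comp ((op.sigmaHom k hk).comp C)
  refine ⟨τ, fun p => ?_⟩
  have : op.sigmaHom k hk = (map τ).comp (rename (shiftVar · (Pi.single k 1))).toRingHom := by
    refine ringHom_ext (fun r => ?_) (fun x => ?_)
    · obtain ⟨r', h⟩ := hop.map_C k r
      simp [τ, sigmaHom, h]
    · simp [sigmaHom, hop.map_X]
  exact RingHom.congr_fun this p

theorem exists_applyWord_eq_map_rename (hop : op.IsDPolynomialRing) {w : List (Fin M)}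
    (hw : ∀ k ∈ w, k ∈ op.σset) :
    ∃ τ : R →+* R, ∀ p, applyWord op w p = map τ (rename (shiftVar · (wordExp w)) p) := by
  induction w with
  | nil =>
    refine ⟨RingHom.id R, fun p => ?_⟩
    simp only [applyWord_nil, wordExp_nil, shiftVar_zero, map_id]
    exact (rename_id_apply p).symm
  | cons k w ih =>
    obtain ⟨τ, hτ⟩ := ih fun j hj => hw j (List.mem_cons_of_mem _ hj)
    obtain ⟨τk, hτk⟩ := hop.exists_delta_eq_map_rename (hw k List.mem_cons_self)
    refine ⟨τk.comp τ, fun p => ?_⟩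
    rw [applyWord_cons, hτ, hτk, ← map_rename, map_map, rename_rename, wordExp_cons]
    congr
    funext x
    simp [shiftVar_shiftVar]

theorem exists_sigma_transform (hop : op.IsDPolynomialRing) (hr : IsRanking lt op.σset op.ν)
    {f : MvPolynomial (DVar n M) R} {u : DVar n M} (hu : IsLeader lt f u) {φ : Fin M → ℕ}
    (hφ : IsSigmaExp op.σset φ) :
    ∃ w s, IsSigmaTransform op (initialOf u f) s ∧
      HasLeadingTerm lt (applyWord op w f) s (shiftVar u φ) (degreeOf u f) := by
  obtain ⟨w, rfl⟩ := exists_wordExp_eq φ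
  have hw : ∀ k ∈ w, k ∈ op.σset := fun k hk => hφ k (wordExp_ne_zero_of_mem hk)
  obtain ⟨τ, hτ⟩ := hop.exists_applyWord_eq_map_rename hw
  have htail : applyWord op w f - applyWord op w (initialOf u f) *
      X (shiftVar u (wordExp w)) ^ degreeOf u f =
        map τ (rename (shiftVar · (wordExp w)) (tailOf u f)) := by
    rw [eq_sub_of_add_eq' (initialOf_mul_X_pow_add_tailOf u f)]
    simp only [map_sub, map_mul, map_pow, rename_X, MvPolynomial.map_X, hτ]
  refine ⟨w, _, ⟨w, hw, rfl⟩, ⟨?_, ?_, ?_⟩⟩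
  · rw [hτ]
    exact map_rename_mem_supported hu.initialOf_mem_supported τ
      fun y hy => hr.shiftVar_lt_shiftVar hy _
  · rw [htail]
    exact map_rename_mem_supported hu.tailOf_mem_supported τ
      fun y hy => hy.imp (hr.shiftVar_lt_shiftVar · _) (congrArg (shiftVar · _))
  · rw [htail]
    refine (degreeOf_map_le _ _ _).trans_lt ?_
    rw [degreeOf_rename_of_injective (shiftVar_injective _)]
    exact degreeOf_tailOf_lt hu.degreeOf_pos

theorem exists_hasLeadingTerm_of_not_reducedWrt (hop : op.IsDPolynomialRing)
    (hr : IsRanking lt op.σset op.ν) {g f : MvPolynomial (DVar n M) R}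
    (h : ¬ ReducedWrt lt op.σset g f) :
    ∃ w s v e, op.IsSigmaTransformOfInitialOrSeparant lt f s ∧
      HasLeadingTerm lt (applyWord op w f) s v e ∧ e ≤ degreeOf v g := by
  simp only [ReducedWrt, not_forall, not_and_or, not_not, not_lt, exists_prop] at h
  obtain ⟨u, hu, ⟨φ, hφ, hmem⟩ | ⟨φ, hφ, hdeg⟩⟩ := h
  · obtain ⟨w, s, hs, hlead⟩ := hop.exists_delta_transform hr hu hφ
    exact ⟨w, s, _, 1, ⟨u, hu, Or.inr hs⟩, hlead,
      Nat.one_le_iff_ne_zero.2 (mem_vars_iff_degreeOf_ne_zero.1 hmem)⟩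
  · obtain ⟨w, s, hs, hlead⟩ := hop.exists_sigma_transform hr hu hφ
    exact ⟨w, s, _, _, ⟨u, hu, Or.inl hs⟩, hlead, hdeg⟩

theorem exists_reduction (hop : op.IsDPolynomialRing) (hr : IsRanking lt op.σset op.ν)
    (A : Set (MvPolynomial (DVar n M) R)) (g : MvPolynomial (DVar n M) R) :
    ∃ H g₀ : MvPolynomial (DVar n M) R,
      (∃ l : List (MvPolynomial (DVar n M) R), H = l.prod ∧
        ∀ h ∈ l, ∃ f ∈ A, op.IsSigmaTransformOfInitialOrSeparant lt f h) ∧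
      ReducedWrtSet lt op.σset g₀ A ∧ (DegreeLex lt g₀ g ∨ g₀ = g) ∧
      H * g - g₀ ∈ Ideal.span (op.transforms A) := by
  have := hr.isStrictTotalOrder
  induction g using (degreeLex_wellFounded hr.wf).induction with
  | _ g ih =>
  by_cases hred : ReducedWrtSet lt op.σset g A
  · exact ⟨1, g, ⟨[], rfl, by simp⟩, hred, Or.inr rfl, by simp⟩
  obtain ⟨f, hfA, hf⟩ : ∃ f ∈ A, ¬ ReducedWrt lt op.σset g f := by
    simpa [ReducedWrtSet] using hred
  obtain ⟨w, s, v, e, hs, hlead, he⟩ := hop.exists_hasLeadingTerm_of_not_reducedWrt hr hf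
  obtain ⟨c, hlex⟩ := hlead.exists_degreeLex hr he
  obtain ⟨_, g₀, ⟨l, rfl, hl⟩, hred₀, hle₀, hmem⟩ := ih _ hlex
  refine ⟨s * l.prod, g₀, ⟨s :: l, rfl, List.forall_mem_cons.2 ⟨⟨f, hfA, hs⟩, hl⟩⟩, hred₀,
    Or.inl (hle₀.elim (·.trans hlex) (· ▸ hlex)), ?_⟩
  have : s * l.prod * g - g₀ =
      l.prod * c * applyWord op w f + (l.prod * (s * g - c * applyWord op w f) - g₀) := by ring
  rw [this]
  exact add_mem (Ideal.mul_mem_left _ _ (Ideal.subset_span ⟨f, hfA, w, rfl⟩)) hmem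

end IsDPolynomialRing

end DStarOps

theorem dStar_reduction_lemma_general {K R : Type} [Field K] [CommRing R] [Algebra K R]
    {n M : ℕ} (op : DStarOps K (MvPolynomial (DVar n M) R) M)
    (hvar : ∀ (k : Fin M) (u : DVar n M),
      op.δ k (X u) = X (shiftVar u (Pi.single k 1)))
    (hconst : ∀ (k : Fin M) (r : R), ∃ r' : R, op.δ k (C r) = C r')
    (lt : DVar n M → DVar n M → Prop)
    (hrank : IsRanking lt op.σset op.ν)
    (A : Set (MvPolynomial (DVar n M) R))
    (g : MvPolynomial (DVar n M) R) :
    ∃ H g₀ : MvPolynomial (DVar n M) R,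
      (∃ l : List (MvPolynomial (DVar n M) R), H = l.prod ∧
        ∀ h ∈ l, ∃ f ∈ A, ∃ u : DVar n M, IsLeader lt f u ∧
          (IsSigmaTransform op (initialOf u f) h ∨
           IsSigmaTransform op (pderiv u f) h)) ∧
      ReducedWrtSet lt op.σset g₀ A ∧
      RkLe lt g₀ g ∧
      InDIdealGen op A (H * g - g₀) := by
  obtain ⟨H, g₀, hH, hred, hle, hmem⟩ :=
    DStarOps.IsDPolynomialRing.exists_reduction ⟨hvar, hconst⟩ hrank A g
  exact ⟨H, g₀, hH, hred, hle.elim hrank.rkLe_of_degreeLex (· ▸ hrank.rkLe_refl g),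
    op.inDIdealGen_of_mem_span hmem⟩

/-- **`D*`-reduction lemma.** For every `g` there are `H` (a product of
`σ`-transforms of initials and separants of elements of `A`) and `g₀` reduced with
respect to `A` with `rk g₀ ≤ rk g` and `H·g ≡ g₀ mod [A]_D`. -/
theorem dStar_reduction_lemma {K R : Type} [Field K] [CommRing R] [Algebra K R]
    {n M : ℕ} (op : DStarOps K (MvPolynomial (DVar n M) R) M)
    (hvar : ∀ (k : Fin M) (u : DVar n M),
      op.δ k (X u) = X (shiftVar u (Pi.single k 1)))
    (hconst : ∀ (k : Fin M) (r : R), ∃ r' : R, op.δ k (C r) = C r')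
    (lt : DVar n M → DVar n M → Prop)
    (hrank : IsRanking lt op.σset op.ν)
    (A : Set (MvPolynomial (DVar n M) R)) (hA : ∀ f ∈ A, ¬ IsConst f)
    (g : MvPolynomial (DVar n M) R) :
    ∃ H g₀ : MvPolynomial (DVar n M) R,
      (∃ l : List (MvPolynomial (DVar n M) R), H = l.prod ∧
        ∀ h ∈ l, ∃ f ∈ A, ∃ u : DVar n M, IsLeader lt f u ∧
          (IsSigmaTransform op (initialOf u f) h ∨
           IsSigmaTransform op (pderiv u f) h)) ∧
      ReducedWrtSet lt op.σset g₀ A ∧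
      RkLe lt g₀ g ∧
      InDIdealGen op A (H * g - g₀) :=
  dStar_reduction_lemma_general op hvar hconst lt hrank A g
end

section
/- Let f ∈ R{x̄}_{D*} \ R with leader u_f and separant s_f, and let δ_{i,j} be one of the derivation-type operators (not an associated endomorphism). Then rk(δ_{i,j}(f) − σᵢ(s_f)·δ_{i,j}(u_f)) < rk(δ_{i,j}(u_f)); i.e., δ_{i,j}(f) = σᵢ(s_f)·δ_{i,j}(u_f) + h where every variable of h is strictly below δ_{i,j}(u_f) in the ranking. -/
open MvPolynomial
open scoped BigOperators

variable {K : Type} [Field K] {A : Type} [CommRing A] [Algebra K A] {M : ℕ}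

theorem IsRanking.shiftVar_lt_shiftVar_s10 {n M : ℕ} {lt : DVar n M → DVar n M → Prop}
    {σset : Finset (Fin M)} {ν : Fin M → ℕ} (hrank : IsRanking lt σset ν) {w u : DVar n M}
    (hwu : lt w u ∨ w = u) {m k : Fin M} (hmk : ν m < ν k) :
    lt (shiftVar w (Pi.single m 1)) (shiftVar u (Pi.single k 1)) := by
  rcases hwu with hwu | rfl
  · exact hrank.trans _ _ _ (hrank.mono w u m hwu) (hrank.op_ord u m k hmk)
  · exact hrank.op_ord w m k hmk

namespace DStarOps

variable {R : Type} [CommRing R] [Algebra K R] {n : ℕ}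

theorem δ_zero (op : DStarOps K A M) (l : Fin M) : op.δ l 0 = 0 := by
  simpa using op.map_add l 0 0

theorem smul_mem_supported {ι : Type} {s : Set ι} (c : K) {p : MvPolynomial ι R}
    (hp : p ∈ supported R s) : c • p ∈ supported R s := by
  rw [← algebraMap_smul R c p]
  exact Subalgebra.smul_mem _ hp _

theorem exists_δ_mul_eq_leibniz_add (op : DStarOps K (MvPolynomial (DVar n M) R) M)
    {l : Fin M} (hl : l ∉ op.σset) {T : Set (DVar n M)} {a b : MvPolynomial (DVar n M) R}
    (ha : ∀ m, op.ν m < op.ν l → op.δ m a ∈ supported R T)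
    (hb : ∀ m, op.ν m < op.ν l → op.δ m b ∈ supported R T) :
    ∃ s ∈ supported R T, op.δ l (a * b) =
      op.δ l a * op.δ (op.fac l) b + op.δ (op.fac l) a * op.δ l b + s := by
  refine ⟨_, Subalgebra.sum_mem _ fun pq hpq => ?_, op.prod_rule l hl a b⟩
  obtain ⟨-, hp, hq, -, -, hpq_le⟩ := Finset.mem_filter.1 hpq
  have hp1 := op.nu_delta _ hp
  have hq1 := op.nu_delta _ hq
  exact smul_mem_supported _ (mul_mem (ha _ (by omega)) (hb _ (by omega)))

theorem ν_fac_lt (op : DStarOps K A M) {l : Fin M} (hl : l ∉ op.σset) :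
    op.ν (op.fac l) < op.ν l := by
  rw [op.nu_sigma _ (op.fac_mem l)]
  exact op.nu_delta l hl

theorem δ_mem_supported (op : DStarOps K (MvPolynomial (DVar n M) R) M)
    (hvar : ∀ (k : Fin M) (u : DVar n M), op.δ k (X u) = X (shiftVar u (Pi.single k 1)))
    (hconst : ∀ (k : Fin M) (r : R), ∃ r' : R, op.δ k (C r) = C r')
    {S T : Set (DVar n M)} {N : ℕ}
    (hST : ∀ w ∈ S, ∀ m, op.ν m < N → shiftVar w (Pi.single m 1) ∈ T)
    {l : Fin M} (hl : op.ν l < N) {p : MvPolynomial (DVar n M) R} (hp : p ∈ supported R S) :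
    op.δ l p ∈ supported R T := by
  induction hν : op.ν l using Nat.strong_induction_on generalizing l p with
  | _ j ih =>
  rw [supported_eq_adjoin_X] at hp
  induction hp using Algebra.adjoin_induction with
  | mem x hx =>
    obtain ⟨v, hv, rfl⟩ := hx
    rw [hvar]
    exact Algebra.subset_adjoin ⟨_, hST v hv l hl, rfl⟩
  | algebraMap r =>
    obtain ⟨r', hr'⟩ := hconst l r
    rw [algebraMap_eq, hr', ← algebraMap_eq]
    exact Subalgebra.algebraMap_mem _ r'
  | add x y _ _ hx hy =>
    rw [op.map_add]
    exact add_mem hx hy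
  | mul x y hx' hy' hx hy =>
    by_cases hlσ : l ∈ op.σset
    · rw [op.sigma_mul l hlσ]
      exact mul_mem hx hy
    have lower : ∀ m, op.ν m < op.ν l → ∀ q ∈ supported R S, op.δ m q ∈ supported R T :=
      fun m hm q hq => ih _ (hν ▸ hm) (by omega) hq rfl
    obtain ⟨s, hs, hxy⟩ := op.exists_δ_mul_eq_leibniz_add hlσ (lower · · x hx') (lower · · y hy')
    have hfac := op.ν_fac_lt hlσ
    rw [hxy]
    exact add_mem (add_mem (mul_mem hx (lower _ hfac y hy'))
      (mul_mem (lower _ hfac x hx') hy)) hs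

/-- Modulo polynomials in variables below `δ k u`, the operator `δ k` acts on polynomials in
variables `≤ u` as a derivation twisted by its associated endomorphism: the correction terms of
the twisted Leibniz rule and the `σ`-transforms only involve operators of rank `< ν k`. -/
theorem δ_sub_separant_mem_supported (op : DStarOps K (MvPolynomial (DVar n M) R) M)
    (hvar : ∀ (k : Fin M) (u : DVar n M), op.δ k (X u) = X (shiftVar u (Pi.single k 1)))
    (hconst : ∀ (k : Fin M) (r : R), ∃ r' : R, op.δ k (C r) = C r')
    {lt : DVar n M → DVar n M → Prop} (hrank : IsRanking lt op.σset op.ν)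
    {u : DVar n M} {k : Fin M} (hk : k ∉ op.σset) {p : MvPolynomial (DVar n M) R}
    (hp : p ∈ supported R {v | lt v u ∨ v = u}) :
    op.δ k p - op.δ (op.fac k) (pderiv u p) * X (shiftVar u (Pi.single k 1)) ∈
      supported R {w | lt w (shiftVar u (Pi.single k 1))} := by
  have hσ := op.fac_mem k
  have lower : ∀ m, op.ν m < op.ν k → ∀ q ∈ supported R {v | lt v u ∨ v = u},
      op.δ m q ∈ supported R {w | lt w (shiftVar u (Pi.single k 1))} :=
    fun m hm q hq => op.δ_mem_supported hvar hconst
      (fun w (hw : lt w u ∨ w = u) m' hm' => hrank.shiftVar_lt_shiftVar_s10 hw hm') hm hq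
  rw [supported_eq_adjoin_X] at hp
  induction hp using Algebra.adjoin_induction with
  | mem x hx =>
    obtain ⟨v, hv, rfl⟩ := hx
    rcases eq_or_ne v u with rfl | hvu
    · rw [pderiv_X_self, op.sigma_one _ hσ, one_mul, hvar, sub_self]
      exact zero_mem _
    · rw [pderiv_X_of_ne hvu, op.δ_zero, zero_mul, sub_zero, hvar]
      exact Algebra.subset_adjoin ⟨_, hrank.mono v u k (hv.resolve_right hvu), rfl⟩
  | algebraMap r =>
    obtain ⟨r', hr'⟩ := hconst k r
    rw [algebraMap_eq, pderiv_C, op.δ_zero, zero_mul, sub_zero, hr', ← algebraMap_eq]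
    exact Subalgebra.algebraMap_mem _ r'
  | add x y _ _ hx hy =>
    rw [op.map_add, (pderiv u).map_add, op.map_add, add_mul, add_sub_add_comm]
    exact add_mem hx hy
  | mul x y hx' hy' hx hy =>
    obtain ⟨s, hs, hxy⟩ := op.exists_δ_mul_eq_leibniz_add hk (lower · · x hx') (lower · · y hy')
    have hfac := op.ν_fac_lt hk
    have twisted : op.δ k (x * y) - op.δ (op.fac k) (pderiv u (x * y)) *
          X (shiftVar u (Pi.single k 1)) =
        (op.δ k x - op.δ (op.fac k) (pderiv u x) * X (shiftVar u (Pi.single k 1))) *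
            op.δ (op.fac k) y +
          op.δ (op.fac k) x *
            (op.δ k y - op.δ (op.fac k) (pderiv u y) * X (shiftVar u (Pi.single k 1))) + s := by
      rw [hxy, pderiv_mul, op.map_add, op.sigma_mul _ hσ, op.sigma_mul _ hσ]
      ring
    rw [twisted]
    exact add_mem (add_mem (mul_mem hx (lower _ hfac y hy'))
      (mul_mem (lower _ hfac x hx') hy)) hs

end DStarOps

theorem separant_rank_lemma_general {K R : Type} [Field K] [CommRing R] [Algebra K R]
    {n M : ℕ} (op : DStarOps K (MvPolynomial (DVar n M) R) M)
    (hvar : ∀ (k : Fin M) (u : DVar n M),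
      op.δ k (X u) = X (shiftVar u (Pi.single k 1)))
    (hconst : ∀ (k : Fin M) (r : R), ∃ r' : R, op.δ k (C r) = C r')
    (lt : DVar n M → DVar n M → Prop)
    (hrank : IsRanking lt op.σset op.ν)
    (f : MvPolynomial (DVar n M) R)
    (uf : DVar n M) (hlead : IsLeader lt f uf)
    (k : Fin M) (hk : k ∉ op.σset) :
    ∀ v ∈ (op.δ k f -
        op.δ (op.fac k) (pderiv uf f) * X (shiftVar uf (Pi.single k 1))).vars,
      lt v (shiftVar uf (Pi.single k 1)) := by
  have hf : f ∈ supported R {v | lt v uf ∨ v = uf} :=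
    mem_supported.2 fun v hv => (eq_or_ne v uf).symm.imp_left (hlead.2 v hv)
  exact mem_supported.1 (op.δ_sub_separant_mem_supported hvar hconst hrank hk hf)

/-- For `f` a nonconstant `D*`-polynomial with leader `u_f` and
separant `s_f`, and `δ_{i,j}` a derivation-type operator (with associated endomorphism
`σᵢ`), every variable of `δ_{i,j}(f) − σᵢ(s_f)·δ_{i,j}(u_f)` is strictly below
`δ_{i,j}(u_f)` in the ranking; i.e. `rk(δ_{i,j}(f) − σᵢ(s_f)·δ_{i,j}(u_f)) <
rk(δ_{i,j}(u_f))`. -/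
theorem separant_rank_lemma {K R : Type} [Field K] [CommRing R] [Algebra K R]
    {n M : ℕ} (op : DStarOps K (MvPolynomial (DVar n M) R) M)
    (hvar : ∀ (k : Fin M) (u : DVar n M),
      op.δ k (X u) = X (shiftVar u (Pi.single k 1)))
    (hconst : ∀ (k : Fin M) (r : R), ∃ r' : R, op.δ k (C r) = C r')
    (lt : DVar n M → DVar n M → Prop)
    (hrank : IsRanking lt op.σset op.ν)
    (f : MvPolynomial (DVar n M) R) (hf : ¬ IsConst f)
    (uf : DVar n M) (hlead : IsLeader lt f uf)
    (k : Fin M) (hk : k ∉ op.σset) :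
    ∀ v ∈ (op.δ k f -
        op.δ (op.fac k) (pderiv uf f) * X (shiftVar uf (Pi.single k 1))).vars,
      lt v (shiftVar uf (Pi.single k 1)) :=
  separant_rank_lemma_general op hvar hconst lt hrank f uf hlead k hk
end

section
/- Let I be a D-ideal of a D*-ring (R,e) with associated injective endomorphisms σ₁,…,σ_t. Then I is a perfect D-ideal (radical and reflexive) if and only if for all a ∈ R: whenever τ₁(a)^{n₁} ⋯ τ_r(a)^{n_r} ∈ I for compositions τⱼ of the σᵢ's and positive integers nⱼ, then a ∈ I. -/
open scoped BigOperators

variable {K : Type} [Field K] {A : Type} [CommRing A] [Algebra K A] {M : ℕ}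

/-- A `D`-ideal `I` of a `D*`-ring (with injective associated
endomorphisms) is perfect (radical and reflexive) iff it satisfies the shuffling
condition: whenever a product `τ₁(a)^{n₁} ⋯ τ_r(a)^{n_r}` (with the `τⱼ` compositions of
the associated endomorphisms and `nⱼ > 0`) belongs to `I`, then `a ∈ I`. -/
theorem perfect_iff_shuffle {K : Type} [Field K] {A : Type} [CommRing A] [Algebra K A]
    {M : ℕ} (op : DStarOps K A M) (I : Ideal A) (hI : IsDIdeal op I) :
    (IsReflexive op I ∧ I.IsRadical) ↔
      (∀ (a : A) (l : List (List (Fin M) × ℕ)), l ≠ [] →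
        (∀ p ∈ l, (∀ k ∈ p.1, k ∈ op.σset) ∧ 0 < p.2) →
        (l.map (fun p => applyWord op p.1 a ^ p.2)).prod ∈ I → a ∈ I) := by
  constructor
  · rintro ⟨hrefl, hrad⟩ a l hne hcond hmem
    have step : ∀ k ∈ op.σset, ∀ x y : A, x * op.δ k y ∈ I → x * y ∈ I := by
      intro k hk x y h
      apply hrefl k hk (x * y)
      rw [op.sigma_mul k hk]
      have heq : x * y * (op.δ k x * op.δ k y) = (x * op.δ k y) * (y * op.δ k x) := by ring
      rw [heq]
      exact I.mul_mem_right _ h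
    have word : ∀ w : List (Fin M), (∀ k ∈ w, k ∈ op.σset) → ∀ x y : A,
        x * applyWord op w y ∈ I → x * y ∈ I := by
      intro w
      induction w with
      | nil => intro _ x y h; exact h
      | cons k w ih =>
        intro hw x y h
        have h1 : x * op.δ k (applyWord op w y) ∈ I := h
        have h2 := step k (hw k (by simp)) x (applyWord op w y) h1
        exact ih (fun k hk => hw k (by simp [hk])) x y h2
    have powlem : ∀ n : ℕ, ∀ w : List (Fin M), (∀ k ∈ w, k ∈ op.σset) → ∀ c x : A,
        c * applyWord op w x ^ n ∈ I → c * x ^ n ∈ I := by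
      intro n
      induction n with
      | zero => intro _ _ c x h; simpa using h
      | succ n ih =>
        intro w hw c x h
        have h1 : (c * applyWord op w x ^ n) * applyWord op w x ∈ I := by
          have heq : (c * applyWord op w x ^ n) * applyWord op w x
              = c * applyWord op w x ^ (n + 1) := by ring
          rw [heq]; exact h
        have h2 := word w hw _ x h1
        have h3 : (c * x) * applyWord op w x ^ n ∈ I := by
          have heq : (c * x) * applyWord op w x ^ n
              = c * applyWord op w x ^ n * x := by ring
          rw [heq]; exact h2
        have h4 := ih w hw (c * x) x h3
        have heq : c * x ^ (n + 1) = c * x * x ^ n := by ring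
        rw [heq]; exact h4
    have main : ∀ l : List (List (Fin M) × ℕ), ∀ c : A,
        (∀ p ∈ l, (∀ k ∈ p.1, k ∈ op.σset) ∧ 0 < p.2) →
        c * (l.map (fun p => applyWord op p.1 a ^ p.2)).prod ∈ I →
        c * a ^ (l.map Prod.snd).sum ∈ I := by
      intro l
      induction l with
      | nil => intro c _ h; simpa using h
      | cons p l ih =>
        intro c hl h
        have h1 : (c * (l.map (fun p => applyWord op p.1 a ^ p.2)).prod)
            * applyWord op p.1 a ^ p.2 ∈ I := by
          have heq : (c * (l.map (fun p => applyWord op p.1 a ^ p.2)).prod)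
              * applyWord op p.1 a ^ p.2
              = c * ((p :: l).map (fun p => applyWord op p.1 a ^ p.2)).prod := by
            simp [List.map_cons, List.prod_cons]; ring
          rw [heq]; exact h
        have h2 := powlem p.2 p.1 (hl p (by simp)).1 _ a h1
        have h3 : (c * a ^ p.2) * (l.map (fun p => applyWord op p.1 a ^ p.2)).prod ∈ I := by
          have heq : (c * a ^ p.2) * (l.map (fun p => applyWord op p.1 a ^ p.2)).prod
              = c * (l.map (fun p => applyWord op p.1 a ^ p.2)).prod * a ^ p.2 := by ring
          rw [heq]; exact h2
        have h4 := ih (c * a ^ p.2) (fun q hq => hl q (by simp [hq])) h3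
        have heq : c * a ^ ((p :: l).map Prod.snd).sum
            = c * a ^ p.2 * a ^ (l.map Prod.snd).sum := by
          simp [List.map_cons, List.sum_cons, pow_add]; ring
        rw [heq]; exact h4
    have hfin := main l 1 hcond (by simpa using hmem)
    have hNpos : 0 < (l.map Prod.snd).sum := by
      cases l with
      | nil => exact absurd rfl hne
      | cons p l =>
        have := (hcond p (by simp)).2
        simp [List.sum_cons]
        omega
    exact hrad ⟨(l.map Prod.snd).sum, by simpa using hfin⟩
  · intro h
    constructor
    · intro k hk a ha
      refine h a [([], 1), ([k], 1)] (by simp) ?_ ?_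
      · intro p hp
        simp at hp
        rcases hp with hp | hp <;> subst hp <;> simp [hk]
      · simpa [applyWord] using ha
    · intro x hx
      obtain ⟨n, hn⟩ := hx
      rcases Nat.eq_zero_or_pos n with h0 | hpos
      · subst h0
        simp at hn
        simpa using I.mul_mem_left x hn
      · refine h x [([], n)] (by simp) ?_ ?_
        · intro p hp; simp at hp; subst hp; simp [hpos]
        · simpa [applyWord] using hn
end

section
/- Let R be a D*-ring (commuting operators from a ranked basis, injective associated endomorphisms). Then the set of perfect D-ideals of R is a perfect conservative system: it is closed under arbitrary intersections and under unions of chains, every member is radical, and for every perfect D-ideal I and every s ∈ R, the ideal quotient I : s = {x ∈ R : xs ∈ I} is again a perfect D-ideal. -/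
open scoped BigOperators

variable {K : Type} [Field K] {A : Type} [CommRing A] [Algebra K A] {M : ℕ}

private lemma key_step {K : Type} [Field K] {A : Type} [CommRing A] [Algebra K A]
    {M : ℕ} (op : DStarOps K A M) {I : Ideal A} (hI : IsPerfectDIdeal op I) :
    ∀ (n : ℕ) (k : Fin M), op.ν k ≤ n → ∀ x s : A, x * s ∈ I →
      op.δ k x * op.δ (op.fac k) s ∈ I := by
  obtain ⟨hD, hRefl, hRad⟩ := hI
  intro n
  induction n with
  | zero =>
    intro k hk x s hxs
    by_cases hkσ : k ∈ op.σset
    · rw [op.fac_sigma k hkσ, ← op.sigma_mul k hkσ]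
      exact hD k _ hxs
    · exact absurd hk (by have := op.nu_delta k hkσ; omega)
  | succ n IH =>
    intro k hk x s hxs
    by_cases hkσ : k ∈ op.σset
    · rw [op.fac_sigma k hkσ, ← op.sigma_mul k hkσ]
      exact hD k _ hxs
    · have hfσ : op.fac k ∈ op.σset := op.fac_mem k
      have hσxs : op.δ (op.fac k) x * op.δ (op.fac k) s ∈ I := by
        rw [← op.sigma_mul (op.fac k) hfσ]; exact hD (op.fac k) _ hxs
      have hmem : (op.δ k x * op.δ (op.fac k) s) * op.δ k (x * s) ∈ I :=
        I.mul_mem_left _ (hD k _ hxs)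
      rw [op.prod_rule k hkσ x s, mul_add, mul_add, Finset.mul_sum] at hmem
      have h2 : (op.δ k x * op.δ (op.fac k) s) * (op.δ (op.fac k) x * op.δ k s) ∈ I := by
        have heq : (op.δ k x * op.δ (op.fac k) s) * (op.δ (op.fac k) x * op.δ k s)
            = (op.δ (op.fac k) x * op.δ (op.fac k) s) * (op.δ k x * op.δ k s) := by ring
        rw [heq]; exact I.mul_mem_right _ hσxs
      have hsum : ∀ pq ∈ Finset.univ.filter
          (fun pq : Fin M × Fin M =>
            pq.1 ∉ op.σset ∧ pq.2 ∉ op.σset ∧ op.fac pq.1 = op.fac k ∧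
              op.fac pq.2 = op.fac k ∧ op.ν pq.1 + op.ν pq.2 ≤ op.ν k),
          (op.δ k x * op.δ (op.fac k) s) *
            (op.α k pq.1 pq.2 • (op.δ pq.1 x * op.δ pq.2 s)) ∈ I := by
        intro pq hpq
        rw [Finset.mem_filter] at hpq
        obtain ⟨-, h1', h2', h3', h4', h5'⟩ := hpq
        have hν2 := op.nu_delta pq.2 h2'
        have hp : op.δ pq.1 x * op.δ (op.fac k) s ∈ I := by
          have := IH pq.1 (by omega) x s hxs
          rwa [h3'] at this
        have heq : (op.δ k x * op.δ (op.fac k) s) *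
              (op.α k pq.1 pq.2 • (op.δ pq.1 x * op.δ pq.2 s))
            = op.α k pq.1 pq.2 •
              ((op.δ pq.1 x * op.δ (op.fac k) s) * (op.δ k x * op.δ pq.2 s)) := by
          rw [mul_smul_comm]; congr 1; ring
        rw [heq, Algebra.smul_def]
        exact I.mul_mem_left _ (I.mul_mem_right _ hp)
      have h3 := Ideal.sum_mem I hsum
      have hu2 : (op.δ k x * op.δ (op.fac k) s) * (op.δ k x * op.δ (op.fac k) s) ∈ I := by
        have hfin := I.sub_mem (I.sub_mem hmem h3) h2
        convert hfin using 1
        ring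
      exact hRad ⟨2, by rw [pow_two]; exact hu2⟩

/-- The perfect `D`-ideals of a `D*`-ring form a perfect conservative
system: they are closed under arbitrary intersections and under unions of nonempty
chains, every member is radical, and they are closed under ideal quotients `I : s`. -/
theorem perfectDIdeals_perfect_conservative_system
    {K : Type} [Field K] {A : Type} [CommRing A] [Algebra K A]
    {M : ℕ} (op : DStarOps K A M) :
    (∀ S : Set (Ideal A), (∀ I ∈ S, IsPerfectDIdeal op I) → IsPerfectDIdeal op (sInf S)) ∧
    (∀ C : Set (Ideal A), C.Nonempty → IsChain (· ≤ ·) C →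
      (∀ I ∈ C, IsPerfectDIdeal op I) →
      ∃ J : Ideal A, ((J : Set A) = ⋃ I ∈ C, (I : Set A)) ∧ IsPerfectDIdeal op J) ∧
    (∀ I : Ideal A, IsPerfectDIdeal op I → I.IsRadical) ∧
    (∀ (I : Ideal A) (s : A), IsPerfectDIdeal op I →
      IsPerfectDIdeal op (I.colon (Ideal.span {s}))) := by
  obtain hcolon : ∀ (I : Ideal A) (s : A), IsPerfectDIdeal op I →
      IsPerfectDIdeal op (I.colon (Ideal.span {s})) := by
    intro I s hI
    obtain ⟨hD, hRefl, hRad⟩ := hI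
    refine ⟨?_, ?_, ?_⟩
    · intro k x hx
      rw [Ideal.mem_colon_span_singleton] at hx ⊢
      have hkey : op.δ k x * op.δ (op.fac k) s ∈ I :=
        key_step op ⟨hD, hRefl, hRad⟩ (op.ν k) k le_rfl x s hx
      refine hRefl (op.fac k) (op.fac_mem k) _ ?_
      have heq : op.δ k x * s * op.δ (op.fac k) (op.δ k x * s)
          = (op.δ k x * op.δ (op.fac k) s) *
            (s * (op.δ (op.fac k) (op.δ k x))) := by
        rw [op.sigma_mul (op.fac k) (op.fac_mem k)]; ring
      rw [heq]
      exact I.mul_mem_right _ hkey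
    · intro k hk x hx
      rw [Ideal.mem_colon_span_singleton] at hx ⊢
      refine hRefl k hk (x * s) ?_
      have heq : x * s * op.δ k (x * s) = (x * op.δ k x * s) * op.δ k s := by
        rw [op.sigma_mul k hk]; ring
      rw [heq]
      exact I.mul_mem_right _ hx
    · intro y hy
      obtain ⟨n, hn⟩ := hy
      rw [Ideal.mem_colon_span_singleton] at hn ⊢
      refine hRad ⟨n + 1, ?_⟩
      have heq : (y * s) ^ (n + 1) = (y ^ n * s) * (y * s ^ n) := by ring
      rw [heq]
      exact I.mul_mem_right _ hn
  refine ⟨?_, ?_, fun I hI => hI.2.2, hcolon⟩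
  · intro S hS
    refine ⟨?_, ?_, ?_⟩
    · intro k a ha
      rw [Ideal.mem_sInf] at ha ⊢
      intro I hIS
      exact (hS I hIS).1 k a (ha hIS)
    · intro k hk a ha
      rw [Ideal.mem_sInf] at ha ⊢
      intro I hIS
      exact (hS I hIS).2.1 k hk a (ha hIS)
    · intro a ha
      obtain ⟨n, hn⟩ := ha
      rw [Ideal.mem_sInf] at hn ⊢
      intro I hIS
      exact (hS I hIS).2.2 ⟨n, hn hIS⟩
  · intro C hne hchain hC
    haveI : Nonempty C := hne.to_subtype
    have hdir : Directed (· ≤ ·) (fun I : C => (I : Ideal A)) :=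
      directedOn_iff_directed.mp hchain.directedOn
    refine ⟨⨆ I : C, (I : Ideal A), ?_, ?_⟩
    · rw [Submodule.coe_iSup_of_directed _ hdir]
      simp [Set.iUnion_coe_set]
    · have hmem : ∀ a : A, a ∈ (⨆ I : C, (I : Ideal A)) ↔ ∃ I ∈ C, a ∈ I := by
        intro a
        rw [← SetLike.mem_coe, Submodule.coe_iSup_of_directed _ hdir]
        simp [Set.iUnion_coe_set]
      refine ⟨?_, ?_, ?_⟩
      · intro k a ha
        obtain ⟨I, hIC, haI⟩ := (hmem a).mp ha
        exact (hmem _).mpr ⟨I, hIC, (hC I hIC).1 k a haI⟩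
      · intro k hk a ha
        obtain ⟨I, hIC, haI⟩ := (hmem _).mp ha
        exact (hmem a).mpr ⟨I, hIC, (hC I hIC).2.1 k hk a haI⟩
      · intro a ha
        obtain ⟨n, hn⟩ := ha
        obtain ⟨I, hIC, haI⟩ := (hmem _).mp hn
        exact (hmem a).mpr ⟨I, hIC, (hC I hIC).2.2 ⟨n, haI⟩⟩
end

section
/- For any subset S of a D*-ring R, the perfect D-ideal generated by S equals ⋃_{k≥0} S_k, where S₀ = S and S_{k+1} = ([S_k]_D)', with M' denoting the set of a ∈ R such that some product τ₁(a)^{k₁}⋯τ_r(a)^{k_r} lies in M for compositions τⱼ of the associated endomorphisms and positive integers kⱼ, and [M]_D denoting the D-ideal generated by M. -/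
open scoped BigOperators

variable {K : Type} [Field K] {A : Type} [CommRing A] [Algebra K A] {M : ℕ}

/-- The shuffling operation `S ↦ S'`: all `a` such that some product
`τ₁(a)^{k₁} ⋯ τ_r(a)^{k_r}` (with `τⱼ` compositions of the associated endomorphisms and
`kⱼ > 0`) lies in `S`. -/
def shuffleSat {K : Type} [Field K] {A : Type} [CommRing A] [Algebra K A] {M : ℕ}
    (op : DStarOps K A M) (S : Set A) : Set A :=
  {a : A | ∃ l : List (List (Fin M) × ℕ), l ≠ [] ∧
    (∀ p ∈ l, (∀ k ∈ p.1, k ∈ op.σset) ∧ 0 < p.2) ∧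
    (l.map (fun p => applyWord op p.1 a ^ p.2)).prod ∈ S}

/-- The `D`-ideal generated by `S`, as a set. -/
def dIdealGenSet {K : Type} [Field K] {A : Type} [CommRing A] [Algebra K A] {M : ℕ}
    (op : DStarOps K A M) (S : Set A) : Set A :=
  {a : A | InDIdealGen op S a}

/-- The iterates `S₀ = S`, `S_{k+1} = ([S_k]_D)'`. -/
def shuffleIter {K : Type} [Field K] {A : Type} [CommRing A] [Algebra K A] {M : ℕ}
    (op : DStarOps K A M) (S : Set A) : ℕ → Set A
  | 0 => S
  | k + 1 => shuffleSat op (dIdealGenSet op (shuffleIter op S k))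

/-- The perfect `D`-ideal generated by `S`, as a set: the intersection of all perfect
`D`-ideals containing `S`. -/
def perfectDIdealGenSet {K : Type} [Field K] {A : Type} [CommRing A] [Algebra K A] {M : ℕ}
    (op : DStarOps K A M) (S : Set A) : Set A :=
  {a : A | ∀ I : Ideal A, S ⊆ I → IsPerfectDIdeal op I → a ∈ I}

/-!
The iterates interleave with the `D`-ideals they generate, `S_k ⊆ [S_k]_D ⊆ S_{k+1}`, so
their union is the directed union of the `D`-ideals `[S_k]_D`, hence a `D`-ideal. It is
radical and reflexive because `aⁿ` and `a·σ(a)` are themselves shuffling products.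

Conversely, a reflexive radical ideal `I` is closed under shuffling. Iterating reflexivity
along a word `w` of associated endomorphisms gives `a·σ_w(a) ∈ I → a ∈ I`, and then
`(x Q)·σ_w(x Q) = (σ_w(x) Q)·(x σ_w(Q))` shows `σ_w(x) Q ∈ I → x Q ∈ I`. This replaces the
factors `τⱼ(a)^{kⱼ}` of a shuffling product in `I` one by one by `a^{kⱼ}`, leaving a power
of `a` in `I`.
-/

section SigmaWords

variable {op : DStarOps K A M} {w : List (Fin M)}

def applyWordHom (op : DStarOps K A M) (hw : ∀ k ∈ w, k ∈ op.σset) : A →* A where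
  toFun := applyWord op w
  map_one' := by
    induction w with
    | nil => rfl
    | cons k w ih =>
      simp only [applyWord, List.foldr_cons] at ih ⊢
      rw [ih fun j hj => hw j (List.mem_cons_of_mem _ hj),
        op.sigma_one k (hw k List.mem_cons_self)]
  map_mul' x y := by
    induction w with
    | nil => rfl
    | cons k w ih =>
      simp only [applyWord, List.foldr_cons] at ih ⊢
      rw [ih fun j hj => hw j (List.mem_cons_of_mem _ hj),
        op.sigma_mul k (hw k List.mem_cons_self)]

theorem applyWord_pow (hw : ∀ k ∈ w, k ∈ op.σset) (x : A) (n : ℕ) :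
    applyWord op w (x ^ n) = applyWord op w x ^ n :=
  map_pow (applyWordHom op hw) x n

variable {I : Ideal A}

theorem mem_of_mul_applyWord_mem (hR : IsReflexive op I) (hrad : I.IsRadical)
    (hw : ∀ k ∈ w, k ∈ op.σset) {a : A} (h : a * applyWord op w a ∈ I) : a ∈ I := by
  induction w generalizing a with
  | nil => exact hrad ⟨2, by rwa [pow_two]⟩
  | cons k w ih =>
    have hk := hw k List.mem_cons_self
    refine ih (fun j hj => hw j (List.mem_cons_of_mem _ hj)) (hR k hk _ ?_)
    have key : a * applyWord op w a * op.δ k (a * applyWord op w a) =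
        a * applyWord op (k :: w) a * (applyWord op w a * op.δ k a) := by
      rw [op.sigma_mul k hk]
      simp only [applyWord, List.foldr_cons]
      ring
    rw [key]
    exact I.mul_mem_right _ h

theorem mul_mem_of_applyWord_mul_mem (hR : IsReflexive op I) (hrad : I.IsRadical)
    (hw : ∀ k ∈ w, k ∈ op.σset) {x Q : A} (h : applyWord op w x * Q ∈ I) : x * Q ∈ I := by
  refine mem_of_mul_applyWord_mem hR hrad hw ?_
  have key : x * Q * applyWord op w (x * Q) =
      applyWord op w x * Q * (x * applyWord op w Q) := by
    rw [show applyWord op w (x * Q) = applyWord op w x * applyWord op w Q from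
      map_mul (applyWordHom op hw) x Q]
    ring
  rw [key]
  exact I.mul_mem_right _ h

theorem mul_pow_sum_mem_of_mul_prod_mem (hR : IsReflexive op I) (hrad : I.IsRadical)
    {a : A} {l : List (List (Fin M) × ℕ)} (hl : ∀ p ∈ l, ∀ k ∈ p.1, k ∈ op.σset) {c : A}
    (h : c * (l.map fun p => applyWord op p.1 a ^ p.2).prod ∈ I) :
    c * a ^ (l.map Prod.snd).sum ∈ I := by
  induction l generalizing c with
  | nil => simpa using h
  | cons p l ih =>
    set rest := (l.map fun p => applyWord op p.1 a ^ p.2).prod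
    have hp : applyWord op p.1 (a ^ p.2) * (c * rest) ∈ I := by
      rw [applyWord_pow (hl p List.mem_cons_self)]
      simpa only [List.map_cons, List.prod_cons, mul_left_comm] using h
    have hrest : c * a ^ p.2 * rest ∈ I := by
      simpa only [mul_left_comm, mul_assoc] using
        mul_mem_of_applyWord_mul_mem hR hrad (hl p List.mem_cons_self) hp
    simpa only [List.map_cons, List.sum_cons, pow_add, mul_assoc] using
      ih (fun q hq => hl q (List.mem_cons_of_mem _ hq)) hrest

theorem shuffleSat_subset (hR : IsReflexive op I) (hrad : I.IsRadical) {T : Set A}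
    (hT : T ⊆ I) : shuffleSat op T ⊆ I := by
  rintro a ⟨l, -, hl, hprod⟩
  have h := mul_pow_sum_mem_of_mul_prod_mem hR hrad (fun p hp => (hl p hp).1) (c := 1)
    (by rw [one_mul]; exact hT hprod)
  exact hrad ⟨_, by rwa [one_mul] at h⟩

theorem shuffleIter_subset_of_isPerfectDIdeal {S : Set A} (hS : S ⊆ I)
    (hI : IsPerfectDIdeal op I) (k : ℕ) : shuffleIter op S k ⊆ I := by
  induction k with
  | zero => exact hS
  | succ k ih => exact shuffleSat_subset hI.2.1 hI.2.2 fun a ha => ha I ih hI.1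

end SigmaWords

theorem mem_shuffleSat_of_pow_mem {op : DStarOps K A M} {T : Set A} {a : A} {n : ℕ}
    (hn : 0 < n) (h : a ^ n ∈ T) : a ∈ shuffleSat op T :=
  ⟨[([], n)], List.cons_ne_nil _ _, by simp [hn], by simpa [applyWord] using h⟩

theorem mem_shuffleSat_of_mul_mem {op : DStarOps K A M} {T : Set A} {a : A} {k : Fin M}
    (hk : k ∈ op.σset) (h : a * op.δ k a ∈ T) : a ∈ shuffleSat op T :=
  ⟨[([], 1), ([k], 1)], List.cons_ne_nil _ _, by simp [hk], by simpa [applyWord] using h⟩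

theorem subset_shuffleSat (op : DStarOps K A M) (T : Set A) : T ⊆ shuffleSat op T :=
  fun _ ha => mem_shuffleSat_of_pow_mem one_pos (by rwa [pow_one])

theorem subset_dIdealGenSet (op : DStarOps K A M) (S : Set A) : S ⊆ dIdealGenSet op S :=
  fun _ ha _ hS _ => hS ha

def dIdealGen (op : DStarOps K A M) (S : Set A) : Ideal A :=
  sInf {I : Ideal A | S ⊆ I ∧ IsDIdeal op I}

theorem coe_dIdealGen (op : DStarOps K A M) (S : Set A) :
    (dIdealGen op S : Set A) = dIdealGenSet op S := by
  ext a
  simp [dIdealGen, dIdealGenSet, InDIdealGen]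

theorem subset_dIdealGen (op : DStarOps K A M) (S : Set A) : S ⊆ dIdealGen op S :=
  fun _ ha => Submodule.mem_sInf.2 fun _ hI => hI.1 ha

theorem dIdealGen_isDIdeal (op : DStarOps K A M) (S : Set A) : IsDIdeal op (dIdealGen op S) :=
  fun k _ ha => Submodule.mem_sInf.2 fun I hI => hI.2 k _ (Submodule.mem_sInf.1 ha I hI)

theorem iUnion_eq_coe_iSup_of_interleaved {R N : Type*} [Semiring R] [AddCommMonoid N]
    [Module R N] {T : ℕ → Set N} {J : ℕ → Submodule R N} (hTJ : ∀ k, T k ⊆ J k)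
    (hJT : ∀ k, (J k : Set N) ⊆ T (k + 1)) : ⋃ k, T k = ↑(⨆ k, J k) := by
  have hmono : Monotone J := monotone_nat_of_le_succ fun k => (hJT k).trans (hTJ (k + 1))
  rw [Submodule.coe_iSup_of_directed J hmono.directed_le]
  exact subset_antisymm (Set.iUnion_mono hTJ)
    (Set.iUnion_subset fun k => (hJT k).trans (Set.subset_iUnion T (k + 1)))

section ShuffleClosure

variable (op : DStarOps K A M) (S : Set A)

theorem dIdealGen_shuffleIter_subset (k : ℕ) :
    (dIdealGen op (shuffleIter op S k) : Set A) ⊆ shuffleIter op S (k + 1) :=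
  coe_dIdealGen op _ ▸ subset_shuffleSat op _

def shuffleClosure : Ideal A :=
  ⨆ k, dIdealGen op (shuffleIter op S k)

theorem coe_shuffleClosure : (shuffleClosure op S : Set A) = ⋃ k, shuffleIter op S k :=
  (iUnion_eq_coe_iSup_of_interleaved (fun _ => subset_dIdealGen op _)
    (dIdealGen_shuffleIter_subset op S)).symm

theorem subset_shuffleClosure : S ⊆ shuffleClosure op S := by
  rw [coe_shuffleClosure]
  exact Set.subset_iUnion (shuffleIter op S) 0

theorem mem_shuffleClosure_iff {a : A} :
    a ∈ shuffleClosure op S ↔ ∃ k, a ∈ shuffleIter op S k := by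
  rw [← SetLike.mem_coe, coe_shuffleClosure, Set.mem_iUnion]

theorem shuffleClosure_isDIdeal : IsDIdeal op (shuffleClosure op S) := by
  intro i a ha
  obtain ⟨k, hk⟩ := (mem_shuffleClosure_iff op S).1 ha
  exact (mem_shuffleClosure_iff op S).2 ⟨k + 1, dIdealGen_shuffleIter_subset op S k <|
    dIdealGen_isDIdeal op _ i a (subset_dIdealGen op _ hk)⟩

theorem shuffleClosure_isReflexive : IsReflexive op (shuffleClosure op S) := by
  intro i hi a ha
  obtain ⟨k, hk⟩ := (mem_shuffleClosure_iff op S).1 ha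
  exact (mem_shuffleClosure_iff op S).2
    ⟨k + 1, mem_shuffleSat_of_mul_mem hi (subset_dIdealGenSet op _ hk)⟩

theorem shuffleClosure_isRadical : (shuffleClosure op S).IsRadical := by
  rintro a ⟨_ | n, ha⟩
  · rw [pow_zero, ← Ideal.eq_top_iff_one] at ha
    exact ha ▸ Submodule.mem_top
  obtain ⟨k, hk⟩ := (mem_shuffleClosure_iff op S).1 ha
  exact (mem_shuffleClosure_iff op S).2
    ⟨k + 1, mem_shuffleSat_of_pow_mem n.succ_pos (subset_dIdealGenSet op _ hk)⟩

theorem shuffleClosure_isPerfectDIdeal : IsPerfectDIdeal op (shuffleClosure op S) :=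
  ⟨shuffleClosure_isDIdeal op S, shuffleClosure_isReflexive op S, shuffleClosure_isRadical op S⟩

end ShuffleClosure

/-- The perfect `D`-ideal generated by `S` is the union of the iterates
`S₀ = S`, `S_{k+1} = ([S_k]_D)'`. -/
theorem perfectDIdealGen_eq_iUnion_shuffleIter
    {K : Type} [Field K] {A : Type} [CommRing A] [Algebra K A]
    {M : ℕ} (op : DStarOps K A M) (S : Set A) :
    perfectDIdealGenSet op S = ⋃ k : ℕ, shuffleIter op S k := by
  apply subset_antisymm
  · intro a ha
    rw [← coe_shuffleClosure]
    exact ha _ (subset_shuffleClosure op S) (shuffleClosure_isPerfectDIdeal op S)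
  · exact Set.iUnion_subset fun k _ ha _ hS hI => shuffleIter_subset_of_isPerfectDIdeal hS hI k ha
end
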